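/- arXiv:2504.10699 — 3 statements merged into one kernel-verified Lean document; each statement's English description precedes it below -/
import Mathlib

section
/- Let H = (C, f, D, g) be a hybrid system and let ψ₁ = (φ₁, υ₁) and ψ₂ = (φ₂, υ₂) be solution pairs to H such that: (1) ψ₁ is compact; (2) φ₁(T, J) = φ₂(0, 0), where (T, J) = max dom ψ₁; (3) if both I_{ψ₁}^J := {t : (t, J) ∈ dom ψ₁} and I_{ψ₂}^0 := {t : (t, 0) ∈ dom ψ₂} have nonempty interior, then (φ₂(0,0), υ₂(0,0)) ∈ C. Then the concatenation ψ = (φ₁|φ₂, υ₁|υ₂) is a solution pair to H. -/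
open MeasureTheory Set

noncomputable section

/-- State/input space: `ℝ^k` with the Euclidean norm. -/
abbrev Vec (k : ℕ) : Type := EuclideanSpace ℝ (Fin k)

/-- A set `E ⊆ ℝ × ℕ` is a compact hybrid time domain if
`E = ⋃_{j=0}^{J} ([t_j, t_{j+1}] × {j})` for some `J ∈ ℕ` and a finite nondecreasing
sequence `0 = t_0 ≤ t_1 ≤ ... ≤ t_{J+1}`. -/
def IsCompactHTD (E : Set (ℝ × ℕ)) : Prop :=
  ∃ (J : ℕ) (t : ℕ → ℝ), t 0 = 0 ∧ (∀ i, i ≤ J → t i ≤ t (i + 1)) ∧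
    E = ⋃ j ∈ Finset.range (J + 1), Set.Icc (t j) (t (j + 1)) ×ˢ ({j} : Set ℕ)

/-- A hybrid time domain is the union of a nondecreasing sequence of compact
hybrid time domains. -/
def IsHTD (E : Set (ℝ × ℕ)) : Prop :=
  ∃ F : ℕ → Set (ℝ × ℕ), (∀ k, IsCompactHTD (F k)) ∧ Monotone F ∧ E = ⋃ k, F k

/-- The time slice `I^j = {t : (t,j) ∈ E}`. -/
def Slice (E : Set (ℝ × ℕ)) (j : ℕ) : Set ℝ := {t | (t, j) ∈ E}

/-- `(T,J) = max E` for a (compact) hybrid time domain `E`. -/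
def IsMaxOf (E : Set (ℝ × ℕ)) (T : ℝ) (J : ℕ) : Prop :=
  (T, J) ∈ E ∧ ∀ p ∈ E, p.1 ≤ T ∧ p.2 ≤ J

/-- `s` is Lebesgue measurable on `S`: preimages (within `S`) of open sets are
Lebesgue measurable subsets of `ℝ`. -/
def LebesgueMeasurableOn {k : ℕ} (s : ℝ → Vec k) (S : Set ℝ) : Prop :=
  ∀ U : Set (Vec k), IsOpen U → NullMeasurableSet {t | t ∈ S ∧ s t ∈ U} volume

/-- `s` is locally essentially bounded on `S`. -/
def LocallyEssBddOn {k : ℕ} (s : ℝ → Vec k) (S : Set ℝ) : Prop :=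
  ∀ r ∈ S, ∃ U : Set ℝ, IsOpen U ∧ r ∈ U ∧ ∃ c : ℝ, 0 ≤ c ∧
    ∀ᵐ t ∂(volume.restrict (U ∩ S)), ‖s t‖ ≤ c

/-- `s` is absolutely continuous on `[a,b]`: for each `ε > 0` there is `δ > 0` such
that every countable collection of disjoint subintervals of `[a,b]` of total length
at most `δ` has total variation of `s` at most `ε`. -/
def AbsContOn {k : ℕ} (s : ℝ → Vec k) (a b : ℝ) : Prop :=
  ∀ ε : ℝ, 0 < ε → ∃ δ : ℝ, 0 < δ ∧ ∀ I : ℕ → ℝ × ℝ,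
    (∀ i, a ≤ (I i).1 ∧ (I i).1 ≤ (I i).2 ∧ (I i).2 ≤ b) →
    (∀ i i', i ≠ i' → Disjoint (Set.Ioo (I i).1 (I i).2) (Set.Ioo (I i').1 (I i').2)) →
    (∑' i, ((I i).2 - (I i).1)) ≤ δ →
    (∑' i, ‖s (I i).2 - s (I i).1‖) ≤ ε

/-- `s` is locally absolutely continuous on `S`: absolutely continuous on every
compact subinterval of `S`. -/
def LocAbsContOn {k : ℕ} (s : ℝ → Vec k) (S : Set ℝ) : Prop :=
  ∀ a b : ℝ, a ≤ b → Set.Icc a b ⊆ S → AbsContOn s a b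

/-- `s` is locally bounded on `S`. -/
def LocallyBoundedOn {k : ℕ} (s : ℝ → Vec k) (S : Set ℝ) : Prop :=
  ∀ t₀ ∈ S, ∃ A ∈ nhds t₀, ∃ M : ℝ, 0 < M ∧ ∀ t ∈ A ∩ S, ‖s t‖ ≤ M

/-- A hybrid input: a function on a hybrid time domain `E` that is Lebesgue measurable
and locally essentially bounded on each time slice. -/
def IsHybridInput {m : ℕ} (υ : ℝ → ℕ → Vec m) (E : Set (ℝ × ℕ)) : Prop :=
  IsHTD E ∧ ∀ j : ℕ,
    LebesgueMeasurableOn (fun t => υ t j) (Slice E j) ∧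
    LocallyEssBddOn (fun t => υ t j) (Slice E j)

/-- A hybrid arc: a function on a hybrid time domain `E` that is locally absolutely
continuous on each time slice. -/
def IsHybridArc {n : ℕ} (φ : ℝ → ℕ → Vec n) (E : Set (ℝ × ℕ)) : Prop :=
  IsHTD E ∧ ∀ j : ℕ, LocAbsContOn (fun t => φ t j) (Slice E j)

/-- A hybrid system `H = (C, f, D, g)`. -/
structure HybridSystem (n m : ℕ) where
  C : Set (Vec n × Vec m)
  f : Vec n × Vec m → Vec n
  D : Set (Vec n × Vec m)
  g : Vec n × Vec m → Vec n

/-- `(φ, υ)` with common domain `E` is a solution pair to `H`. -/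
def IsSolutionPair {n m : ℕ} (H : HybridSystem n m)
    (φ : ℝ → ℕ → Vec n) (υ : ℝ → ℕ → Vec m) (E : Set (ℝ × ℕ)) : Prop :=
  IsHybridArc φ E ∧ IsHybridInput υ E ∧
  (φ 0 0, υ 0 0) ∈ closure H.C ∪ H.D ∧
  (∀ j : ℕ, (interior (Slice E j)).Nonempty →
    (∀ t ∈ interior (Slice E j), (φ t j, υ t j) ∈ H.C) ∧
    (∀ᵐ t ∂(volume.restrict (Slice E j)),
      HasDerivWithinAt (fun s => φ s j) (H.f (φ t j, υ t j)) (Slice E j) t)) ∧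
  (∀ p : ℝ × ℕ, p ∈ E → (p.1, p.2 + 1) ∈ E →
    (φ p.1 p.2, υ p.1 p.2) ∈ H.D ∧ φ p.1 (p.2 + 1) = H.g (φ p.1 p.2, υ p.1 p.2))

/-- Backward-in-time jump map `g^bw(x,u) = {z : x = g(z,u), (z,u) ∈ D}`. -/
def gbw {n m : ℕ} (H : HybridSystem n m) (x : Vec n) (u : Vec m) : Set (Vec n) :=
  {z | x = H.g (z, u) ∧ (z, u) ∈ H.D}

/-- Backward-in-time jump set `D^bw`. -/
def Dbw {n m : ℕ} (H : HybridSystem n m) : Set (Vec n × Vec m) :=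
  {p | ∃ z : Vec n, p.1 = H.g (z, p.2) ∧ (z, p.2) ∈ H.D}

/-- `(φ, υ)` with common domain `E` is a solution pair to the backward-in-time
system `H^bw = (C, -f, D^bw, g^bw)` of `H` (the jump inclusion is set-valued). -/
def IsBwSolutionPair {n m : ℕ} (H : HybridSystem n m)
    (φ : ℝ → ℕ → Vec n) (υ : ℝ → ℕ → Vec m) (E : Set (ℝ × ℕ)) : Prop :=
  IsHybridArc φ E ∧ IsHybridInput υ E ∧
  (φ 0 0, υ 0 0) ∈ closure H.C ∪ Dbw H ∧
  (∀ j : ℕ, (interior (Slice E j)).Nonempty →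
    (∀ t ∈ interior (Slice E j), (φ t j, υ t j) ∈ H.C) ∧
    (∀ᵐ t ∂(volume.restrict (Slice E j)),
      HasDerivWithinAt (fun s => φ s j) (-(H.f (φ t j, υ t j))) (Slice E j) t)) ∧
  (∀ p : ℝ × ℕ, p ∈ E → (p.1, p.2 + 1) ∈ E →
    (φ p.1 p.2, υ p.1 p.2) ∈ Dbw H ∧ φ p.1 (p.2 + 1) ∈ gbw H (φ p.1 p.2) (υ p.1 p.2))

/-- Minkowski sum `E + {(T,J)}`. -/
def Shift (E : Set (ℝ × ℕ)) (T : ℝ) (J : ℕ) : Set (ℝ × ℕ) :=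
  {p | ∃ q ∈ E, p = (q.1 + T, q.2 + J)}

/-- `ψ` with domain `E` is the concatenation `ψ₁|ψ₂`, where `(T,J) = max E₁`. -/
def IsConcat {α : Type*} (T : ℝ) (J : ℕ)
    (ψ₁ : ℝ → ℕ → α) (E₁ : Set (ℝ × ℕ))
    (ψ₂ : ℝ → ℕ → α) (E₂ : Set (ℝ × ℕ))
    (ψ : ℝ → ℕ → α) (E : Set (ℝ × ℕ)) : Prop :=
  E = E₁ ∪ Shift E₂ T J ∧
  (∀ p ∈ E₁, p ≠ (T, J) → ψ p.1 p.2 = ψ₁ p.1 p.2) ∧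
  (∀ p ∈ Shift E₂ T J, ψ p.1 p.2 = ψ₂ (p.1 - T) (p.2 - J))

/-- Minkowski difference `{(T,J)} − E`. -/
def RevDom (E : Set (ℝ × ℕ)) (T : ℝ) (J : ℕ) : Set (ℝ × ℕ) :=
  {p | ∃ q ∈ E, p = (T - q.1, J - q.2)}

/-- `(φ', υ')` with domain `E'` is the reversal of the compact pair `(φ, υ)` with
domain `E` and `(T,J) = max E`; `C` is the flow set used in the closure condition
on `υ'(0,0)`. -/
def IsReversal {n m : ℕ} (C : Set (Vec n × Vec m)) (T : ℝ) (J : ℕ)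
    (φ : ℝ → ℕ → Vec n) (υ : ℝ → ℕ → Vec m) (E : Set (ℝ × ℕ))
    (φ' : ℝ → ℕ → Vec n) (υ' : ℝ → ℕ → Vec m) (E' : Set (ℝ × ℕ)) : Prop :=
  E' = RevDom E T J ∧
  (∀ p ∈ E', φ' p.1 p.2 = φ (T - p.1) (J - p.2)) ∧
  (∀ j : ℕ, ∀ t ∈ interior (Slice E' j), υ' t j = υ (T - t) (J - j)) ∧
  ((interior (Slice E' 0)).Nonempty → (φ' 0 0, υ' 0 0) ∈ closure C) ∧
  (∀ p : ℝ × ℕ, p ∈ E' → (p.1, p.2 + 1) ∈ E' → υ' p.1 p.2 = υ (T - p.1) (J - (p.2 + 1)))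

/-- Lipschitz flow assumption with constants `Kx, Ku`. -/
def LipschitzFlow {n m : ℕ} (H : HybridSystem n m) (Kx Ku : ℝ) : Prop :=
  0 < Kx ∧ 0 < Ku ∧
  ∀ (x₀ x₁ : Vec n) (u₀ u₁ : Vec m),
    (x₀, u₀) ∈ H.C → (x₁, u₀) ∈ H.C → (x₀, u₁) ∈ H.C →
    ‖H.f (x₀, u₀) - H.f (x₁, u₀)‖ ≤ Kx * ‖x₀ - x₁‖ ∧
    ‖H.f (x₀, u₀) - H.f (x₀, u₁)‖ ≤ Ku * ‖u₀ - u₁‖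

/-- Linearly bounded jump map assumption with constants `Kx, Ku`. -/
def LinearBoundedJump {n m : ℕ} (H : HybridSystem n m) (Kx Ku : ℝ) : Prop :=
  0 < Kx ∧ 0 < Ku ∧
  ∀ (x₀ x₁ : Vec n) (u₀ u₁ : Vec m), (x₀, u₀) ∈ H.D → (x₁, u₁) ∈ H.D →
    ‖H.g (x₀, u₀) - H.g (x₁, u₁)‖ ≤ Kx * ‖x₀ - x₁‖ + Ku * ‖u₀ - u₁‖

/-- `φ` with domain `F ⊆ E'` is a reconstructed solution with input `υ'` (defined on
`E'`) and initial condition `x0`: it starts at `x0`, flows according to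
`f(·, υ')` on each nondegenerate slice, and jumps according to `g(·, υ')`. -/
def IsReconSolution {n m : ℕ} (H : HybridSystem n m)
    (υ' : ℝ → ℕ → Vec m) (E' : Set (ℝ × ℕ)) (x0 : Vec n)
    (φ : ℝ → ℕ → Vec n) (F : Set (ℝ × ℕ)) : Prop :=
  F ⊆ E' ∧ (0, 0) ∈ F ∧ φ 0 0 = x0 ∧ IsHTD F ∧
  (∀ j : ℕ, LocAbsContOn (fun t => φ t j) (Slice F j)) ∧
  (∀ j : ℕ, (interior (Slice F j)).Nonempty →
    ∀ᵐ t ∂(volume.restrict (Slice F j)),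
      HasDerivWithinAt (fun s => φ s j) (H.f (φ t j, υ' t j)) (Slice F j) t) ∧
  (∀ p : ℝ × ℕ, p ∈ F → (p.1, p.2 + 1) ∈ F →
    φ p.1 (p.2 + 1) = H.g (φ p.1 p.2, υ' p.1 p.2))

/-- A maximal reconstructed solution: one admitting no proper extension. -/
def IsMaximalRecon {n m : ℕ} (H : HybridSystem n m)
    (υ' : ℝ → ℕ → Vec m) (E' : Set (ℝ × ℕ)) (x0 : Vec n)
    (φ : ℝ → ℕ → Vec n) (F : Set (ℝ × ℕ)) : Prop :=
  IsReconSolution H υ' E' x0 φ F ∧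
  ∀ (φ₂ : ℝ → ℕ → Vec n) (F₂ : Set (ℝ × ℕ)),
    IsReconSolution H υ' E' x0 φ₂ F₂ → F ⊆ F₂ →
    (∀ p ∈ F, φ₂ p.1 p.2 = φ p.1 p.2) → F₂ = F

/-!
The domain of the concatenation is `E₁ ∪ (E₂ + (T, J))`, and the two pieces share only
`(T, J)`. Since `φ₁(T, J) = φ₂(0, 0)`, `φ` agrees with `φ₁` on `E₁` and with the translate of
`φ₂` on the other piece. So does `υ`, except possibly at `(T, J)`, which is harmless because
`{T}` is null and lies in the interior of neither piece. Consecutive points `(t, j)`,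
`(t, j + 1)` of the domain lie in the same piece, so jumps are inherited. The conditions on a
time slice are local in time, and only the `J`-th slice meets both pieces. There the pieces are
intervals `A ⊆ (-∞, T]` and `B ⊆ [T, ∞)` that both contain `T`. Absolute continuity and local
essential boundedness are glued over `[a, T]` and `[T, b]`. At almost every point, a derivative
within `A ∪ B` is a derivative within `A` or within `B`. If `T` is interior to `A ∪ B`, then both
pieces have nonempty interior, and the flow-set condition at `T` is hypothesis (3).
-/

open Filter Topology

section TimeDomains

variable {E E₁ E₂ : Set (ℝ × ℕ)} {T : ℝ} {J j : ℕ}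

theorem mem_biUnion_Icc_prod_singleton_iff {t : ℕ → ℝ} {p : ℝ × ℕ} :
    p ∈ ⋃ j ∈ Finset.range (J + 1), Icc (t j) (t (j + 1)) ×ˢ ({j} : Set ℕ) ↔
      p.2 ≤ J ∧ p.1 ∈ Icc (t p.2) (t (p.2 + 1)) := by
  simp only [mem_iUnion, Finset.mem_range, mem_prod, mem_singleton_iff, exists_prop]
  constructor
  · rintro ⟨j, hj, hp, rfl⟩
    exact ⟨by omega, hp⟩
  · rintro ⟨hj, hp⟩
    exact ⟨p.2, by omega, hp, rfl⟩

theorem mem_shift_iff {p : ℝ × ℕ} :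
    p ∈ Shift E T J ↔ J ≤ p.2 ∧ (p.1 - T, p.2 - J) ∈ E := by
  constructor
  · rintro ⟨q, hq, rfl⟩
    simpa using hq
  · rintro ⟨hJ, hp⟩
    exact ⟨_, hp, by ext <;> simp; omega⟩

theorem shift_eq_image :
    Shift E T J = (fun q : ℝ × ℕ => (q.1 + T, q.2 + J)) '' E := by
  ext p
  simp [Shift, eq_comm]

theorem IsCompactHTD.exists_eq_biUnion_of_isMaxOf (h : IsCompactHTD E) (hmax : IsMaxOf E T J) :
    ∃ t : ℕ → ℝ, t 0 = 0 ∧ (∀ i ≤ J, t i ≤ t (i + 1)) ∧ t (J + 1) = T ∧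
      E = ⋃ j ∈ Finset.range (J + 1), Icc (t j) (t (j + 1)) ×ˢ ({j} : Set ℕ) := by
  obtain ⟨J', t, ht0, htm, rfl⟩ := h
  obtain ⟨hJ, -, hT⟩ := mem_biUnion_Icc_prod_singleton_iff.1 hmax.1
  obtain ⟨hT', hJ'⟩ := hmax.2 (t (J' + 1), J')
    (mem_biUnion_Icc_prod_singleton_iff.2 ⟨le_rfl, htm J' le_rfl, le_rfl⟩)
  obtain rfl : J' = J := le_antisymm hJ' hJ
  exact ⟨t, ht0, htm, le_antisymm hT' hT, rfl⟩

theorem IsCompactHTD.zero_mem (h : IsCompactHTD E) : ((0 : ℝ), 0) ∈ E := by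
  obtain ⟨J, t, ht0, htm, rfl⟩ := h
  exact mem_biUnion_Icc_prod_singleton_iff.2 ⟨J.zero_le, ht0.le, ht0 ▸ htm 0 J.zero_le⟩

theorem IsCompactHTD.nonneg (h : IsCompactHTD E) {p : ℝ × ℕ} (hp : p ∈ E) : 0 ≤ p.1 := by
  obtain ⟨J, t, ht0, htm, rfl⟩ := h
  obtain ⟨hj, hp, -⟩ := mem_biUnion_Icc_prod_singleton_iff.1 hp
  have : ∀ j ≤ J, t 0 ≤ t j := by
    intro j hj
    induction j with
    | zero => exact le_rfl
    | succ j ih => exact (ih (by omega)).trans (htm j (by omega))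
  linarith [this _ hj]

theorem IsCompactHTD.ordConnected_slice (h : IsCompactHTD E) (j : ℕ) :
    (Slice E j).OrdConnected := by
  obtain ⟨J, t, -, -, rfl⟩ := h
  refine ⟨fun x hx y hy z hz => ?_⟩
  obtain ⟨hj, hx, -⟩ := mem_biUnion_Icc_prod_singleton_iff.1 hx
  obtain ⟨-, -, hy⟩ := mem_biUnion_Icc_prod_singleton_iff.1 hy
  exact mem_biUnion_Icc_prod_singleton_iff.2 ⟨hj, hx.trans hz.1, hz.2.trans hy⟩

theorem IsCompactHTD.union_shift {F : Set (ℝ × ℕ)}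
    (h₁ : IsCompactHTD E₁) (hmax : IsMaxOf E₁ T J) (hF : IsCompactHTD F) :
    IsCompactHTD (E₁ ∪ Shift F T J) := by
  obtain ⟨t, ht0, htm, rfl, rfl⟩ := h₁.exists_eq_biUnion_of_isMaxOf hmax
  obtain ⟨K, s, hs0, hsm, rfl⟩ := hF
  refine ⟨J + K, fun i => if i ≤ J then t i else t (J + 1) + s (i - J), by simp [ht0],
    fun i hi => ?_, ?_⟩
  · have := htm i
    have := hsm (i - J)
    have : s 0 ≤ s 1 := hsm 0 (by omega)
    dsimp only
    split_ifs <;> grind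
  · ext ⟨x, j⟩
    simp only [mem_union, mem_biUnion_Icc_prod_singleton_iff, mem_shift_iff, mem_Icc]
    have := htm J le_rfl
    have : s 0 ≤ s 1 := hsm 0 (by omega)
    split_ifs <;> grind

theorem IsHTD.zero_mem (h : IsHTD E) : ((0 : ℝ), 0) ∈ E := by
  obtain ⟨F, hF, -, rfl⟩ := h
  exact mem_iUnion.2 ⟨0, (hF 0).zero_mem⟩

theorem IsHTD.nonneg (h : IsHTD E) {p : ℝ × ℕ} (hp : p ∈ E) : 0 ≤ p.1 := by
  obtain ⟨F, hF, -, rfl⟩ := h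
  obtain ⟨k, hk⟩ := mem_iUnion.1 hp
  exact (hF k).nonneg hk

theorem IsHTD.ordConnected_slice (h : IsHTD E) (j : ℕ) : (Slice E j).OrdConnected := by
  obtain ⟨F, hF, hmono, rfl⟩ := h
  refine ⟨fun x hx y hy z hz => ?_⟩
  obtain ⟨a, hx⟩ := mem_iUnion.1 hx
  obtain ⟨b, hy⟩ := mem_iUnion.1 hy
  have hz : z ∈ Slice (F (max a b)) j :=
    ((hF _).ordConnected_slice j).out (hmono (le_max_left a b) hx) (hmono (le_max_right a b) hy) hz
  exact mem_iUnion.2 ⟨_, hz⟩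

theorem IsCompactHTD.isHTD_union_shift (h₁ : IsCompactHTD E₁) (hmax : IsMaxOf E₁ T J)
    (h : IsHTD E) : IsHTD (E₁ ∪ Shift E T J) := by
  obtain ⟨F, hF, hmono, rfl⟩ := h
  refine ⟨fun k => E₁ ∪ Shift (F k) T J, fun k => h₁.union_shift hmax (hF k),
    fun a b hab => ?_, ?_⟩
  · simp only [shift_eq_image]
    exact union_subset_union_right _ (image_mono (hmono hab))
  · simp only [shift_eq_image, image_iUnion, union_iUnion]

theorem slice_shift_of_lt (hj : j < J) : Slice (Shift E T J) j = ∅ :=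
  eq_empty_of_forall_notMem fun _ ht => (mem_shift_iff.1 ht).1.not_gt hj

theorem slice_shift_of_le (hj : J ≤ j) : Slice (Shift E T J) j = (· - T) ⁻¹' Slice E (j - J) := by
  ext t
  exact mem_shift_iff.trans (and_iff_right hj)

theorem forall_slice_shift {α : Type*} {P : (ℝ → α) → Set ℝ → Prop} (hP : ∀ f, P f ∅)
    (hPT : ∀ f S, P f S → P (fun t => f (t - T)) ((· - T) ⁻¹' S)) {ψ : ℝ → ℕ → α}
    (h : ∀ k, P (fun t => ψ t k) (Slice E k)) (j : ℕ) :
    P (fun t => ψ (t - T) (j - J)) (Slice (Shift E T J) j) := by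
  rcases lt_or_ge j J with hj | hj
  · rw [slice_shift_of_lt hj]; exact hP _
  · rw [slice_shift_of_le hj]; exact hPT _ _ (h _)

theorem IsHTD.measurableSet_slice_shift (h : IsHTD E) (T : ℝ) (J j : ℕ) :
    MeasurableSet (Slice (Shift E T J) j) := by
  rcases lt_or_ge j J with hj | hj
  · rw [slice_shift_of_lt hj]; exact MeasurableSet.empty
  · rw [slice_shift_of_le hj]
    exact (h.ordConnected_slice _).measurableSet.preimage (measurable_sub_const T)

theorem IsHTD.slice_shift_subset_Ici (h : IsHTD E) (T : ℝ) (J j : ℕ) :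
    Slice (Shift E T J) j ⊆ Ici T :=
  fun _ ht => sub_nonneg.1 (h.nonneg (mem_shift_iff.1 ht).2)

theorem IsHTD.self_mem_slice_shift (h : IsHTD E) (T : ℝ) (J : ℕ) : T ∈ Slice (Shift E T J) J :=
  mem_shift_iff.2 ⟨le_rfl, by simpa using h.zero_mem⟩

theorem IsMaxOf.slice_subset_Iic (hmax : IsMaxOf E₁ T J) (j : ℕ) : Slice E₁ j ⊆ Iic T :=
  fun t ht => (hmax.2 (t, j) ht).1

theorem IsMaxOf.eq_of_nonempty_slices (hmax : IsMaxOf E₁ T J) (h₁ : (Slice E₁ j).Nonempty)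
    (h₂ : (Slice (Shift E₂ T J) j).Nonempty) : j = J := by
  obtain ⟨t, ht⟩ := h₁
  obtain ⟨t', ht'⟩ := h₂
  exact le_antisymm (hmax.2 _ ht).2 (mem_shift_iff.1 ht').1

theorem IsMaxOf.mem_slices_of_nonempty (hmax : IsMaxOf E₁ T J) (h₂ : IsHTD E₂)
    (h₁n : (Slice E₁ j).Nonempty) (h₂n : (Slice (Shift E₂ T J) j).Nonempty) :
    T ∈ Slice E₁ j ∧ T ∈ Slice (Shift E₂ T J) j := by
  obtain rfl := hmax.eq_of_nonempty_slices h₁n h₂n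
  exact ⟨hmax.1, h₂.self_mem_slice_shift T j⟩

theorem IsMaxOf.mem_succ_cases (hmax : IsMaxOf E₁ T J) (h₂ : IsHTD E₂) {x : ℝ}
    (hp : (x, j) ∈ E₁ ∪ Shift E₂ T J) (hp' : (x, j + 1) ∈ E₁ ∪ Shift E₂ T J) :
    ((x, j) ∈ E₁ ∧ (x, j + 1) ∈ E₁ ∧ j < J) ∨
      ((x, j) ∈ Shift E₂ T J ∧ (x, j + 1) ∈ Shift E₂ T J) := by
  rcases hp' with hp' | hp'
  · have hj : j + 1 ≤ J := (hmax.2 _ hp').2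
    rcases hp with hp | hp
    · exact Or.inl ⟨hp, hp', hj⟩
    · exact absurd (mem_shift_iff.1 hp).1 (by dsimp only; omega)
  rcases hp with hp | hp
  · obtain ⟨hxT, hjJ⟩ := hmax.2 _ hp
    obtain rfl : x = T := le_antisymm hxT (h₂.slice_shift_subset_Ici T J (j + 1) hp')
    have hJj : J ≤ j + 1 := (mem_shift_iff.1 hp').1
    rcases eq_or_lt_of_le hjJ with rfl | hjJ
    · exact Or.inr ⟨h₂.self_mem_slice_shift x j, hp'⟩
    · obtain rfl : J = j + 1 := by dsimp only at hjJ hJj; omega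
      exact Or.inl ⟨hp, hmax.1, hjJ⟩
  · exact Or.inr ⟨hp, hp'⟩

end TimeDomains

section AbsoluteContinuity

variable {k : ℕ} {s s' : ℝ → Vec k} {a b c T : ℝ}

def DisjointIntervalsIn (a b : ℝ) (I : ℕ → ℝ × ℝ) : Prop :=
  (∀ i, a ≤ (I i).1 ∧ (I i).1 ≤ (I i).2 ∧ (I i).2 ≤ b) ∧
    ∀ i i', i ≠ i' → Disjoint (Ioo (I i).1 (I i).2) (Ioo (I i').1 (I i').2)

/-- `AbsContOn` sums countable families with `tsum`; tested on finite subfamilies instead,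
absolute continuity can be cut at a point and glued back. -/
def AbsContOnFinite (s : ℝ → Vec k) (a b : ℝ) : Prop :=
  ∀ ε > 0, ∃ δ > 0, ∀ I, DisjointIntervalsIn a b I → ∀ u : Finset ℕ,
    ∑ i ∈ u, ((I i).2 - (I i).1) ≤ δ → ∑ i ∈ u, ‖s (I i).2 - s (I i).1‖ ≤ ε

theorem DisjointIntervalsIn.summable_length {I : ℕ → ℝ × ℝ} (hI : DisjointIntervalsIn a b I) :
    Summable fun i => (I i).2 - (I i).1 := by
  have hsub : ⋃ i, Ioo (I i).1 (I i).2 ⊆ Icc a b :=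
    iUnion_subset fun i => Ioo_subset_Icc_self.trans (Icc_subset_Icc (hI.1 i).1 (hI.1 i).2.2)
  have hfin : ∑' i, volume (Ioo (I i).1 (I i).2) ≠ ⊤ := by
    rw [← measure_iUnion hI.2 fun _ => measurableSet_Ioo]
    exact ((measure_mono hsub).trans_lt measure_Icc_lt_top).ne
  simpa [Real.volume_Ioo, (hI.1 _).2.1] using ENNReal.summable_toReal hfin

theorem absContOn_iff_absContOnFinite : AbsContOn s a b ↔ AbsContOnFinite s a b := by
  refine forall₂_congr fun ε hε => exists_congr fun δ => and_congr_right fun hδ => ?_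
  constructor
  · intro h I hI u hu
    have hab : a ≤ b := (hI.1 0).1.trans ((hI.1 0).2.1.trans (hI.1 0).2.2)
    -- pad the finite subfamily with degenerate intervals
    set P : ℕ → ℝ × ℝ := fun i => if i ∈ u then I i else (a, a)
    have hP : ∀ i ∉ u, P i = (a, a) := fun i hi => if_neg hi
    have hPu : ∀ i ∈ u, P i = I i := fun i hi => if_pos hi
    have hPI : DisjointIntervalsIn a b P := by
      refine ⟨fun i => ?_, fun i i' hii' => ?_⟩
      · by_cases hi : i ∈ u
        · rw [hPu i hi]; exact hI.1 i
        · rw [hP i hi]; exact ⟨le_rfl, le_rfl, hab⟩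
      · by_cases hi : i ∈ u
        · by_cases hi' : i' ∈ u
          · rw [hPu i hi, hPu i' hi']; exact hI.2 i i' hii'
          · simp [hP i' hi']
        · simp [hP i hi]
    have hlen := h P hPI.1 hPI.2
    rw [tsum_eq_sum (s := u) fun i hi => by simp [hP i hi],
      tsum_eq_sum (s := u) fun i hi => by simp [hP i hi]] at hlen
    have hsum (F : ℝ × ℝ → ℝ) : ∑ i ∈ u, F (P i) = ∑ i ∈ u, F (I i) :=
      Finset.sum_congr rfl fun i hi => by rw [hPu i hi]
    rw [hsum fun p => p.2 - p.1, hsum fun p => ‖s p.2 - s p.1‖] at hlen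
    exact hlen hu
  · intro h I hIab hIdisj hlen
    have hI : DisjointIntervalsIn a b I := ⟨hIab, hIdisj⟩
    refine tsum_le_of_sum_le' hε.le fun u => h I hI u ?_
    exact (hI.summable_length.sum_le_tsum u fun i _ => sub_nonneg.2 (hIab i).2.1).trans hlen

def leftPart (c : ℝ) (I : ℕ → ℝ × ℝ) : ℕ → ℝ × ℝ := fun i => (min (I i).1 c, min (I i).2 c)

def rightPart (c : ℝ) (I : ℕ → ℝ × ℝ) : ℕ → ℝ × ℝ := fun i => (max (I i).1 c, max (I i).2 c)

theorem disjointIntervalsIn_leftPart {I : ℕ → ℝ × ℝ} (hI : DisjointIntervalsIn a b I)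
    (hac : a ≤ c) : DisjointIntervalsIn a c (leftPart c I) := by
  have hsub (i : ℕ) : Ioo (leftPart c I i).1 (leftPart c I i).2 ⊆ Ioo (I i).1 (I i).2 := by
    intro x hx
    simp only [leftPart, mem_Ioo, min_lt_iff, lt_min_iff] at hx ⊢
    grind
  refine ⟨fun i => ?_, fun i i' hii' => (hI.2 i i' hii').mono (hsub i) (hsub i')⟩
  exact ⟨le_min (hI.1 i).1 hac, min_le_min_right c (hI.1 i).2.1, min_le_right _ _⟩

theorem disjointIntervalsIn_rightPart {I : ℕ → ℝ × ℝ} (hI : DisjointIntervalsIn a b I)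
    (hcb : c ≤ b) : DisjointIntervalsIn c b (rightPart c I) := by
  have hsub (i : ℕ) : Ioo (rightPart c I i).1 (rightPart c I i).2 ⊆ Ioo (I i).1 (I i).2 := by
    intro x hx
    simp only [rightPart, mem_Ioo, max_lt_iff, lt_max_iff] at hx ⊢
    grind
  refine ⟨fun i => ?_, fun i i' hii' => (hI.2 i i' hii').mono (hsub i) (hsub i')⟩
  exact ⟨le_max_right _ _, max_le_max_right c (hI.1 i).2.1, max_le (hI.1 i).2.2 hcb⟩

theorem sub_eq_leftPart_add_rightPart {M : Type*} [AddCommGroup M] (f : ℝ → M) (c : ℝ)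
    (I : ℕ → ℝ × ℝ) (i : ℕ) :
    f (I i).2 - f (I i).1 = (f (leftPart c I i).2 - f (leftPart c I i).1) +
      (f (rightPart c I i).2 - f (rightPart c I i).1) := by
  simp only [leftPart, rightPart]
  rcases le_total (I i).1 c with h1 | h1 <;> rcases le_total (I i).2 c with h2 | h2 <;>
    simp only [min_eq_left, min_eq_right, max_eq_left, max_eq_right, h1, h2] <;> abel

theorem AbsContOnFinite.glue (hac : a ≤ c) (hcb : c ≤ b) (h₁ : AbsContOnFinite s a c)
    (h₂ : AbsContOnFinite s c b) : AbsContOnFinite s a b := by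
  intro ε hε
  obtain ⟨δ₁, hδ₁, H₁⟩ := h₁ (ε / 2) (half_pos hε)
  obtain ⟨δ₂, hδ₂, H₂⟩ := h₂ (ε / 2) (half_pos hε)
  refine ⟨min δ₁ δ₂, lt_min hδ₁ hδ₂, fun I hI u hu => ?_⟩
  have hI₁ := disjointIntervalsIn_leftPart hI hac
  have hI₂ := disjointIntervalsIn_rightPart hI hcb
  have hlen := Finset.sum_congr rfl fun i (_ : i ∈ u) => sub_eq_leftPart_add_rightPart id c I i
  simp only [id, Finset.sum_add_distrib] at hlen
  have hnn₁ := Finset.sum_nonneg fun i (_ : i ∈ u) => sub_nonneg.2 (hI₁.1 i).2.1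
  have hnn₂ := Finset.sum_nonneg fun i (_ : i ∈ u) => sub_nonneg.2 (hI₂.1 i).2.1
  have hu₁ := H₁ _ hI₁ u (by linarith [min_le_left δ₁ δ₂])
  have hu₂ := H₂ _ hI₂ u (by linarith [min_le_right δ₁ δ₂])
  calc ∑ i ∈ u, ‖s (I i).2 - s (I i).1‖
      ≤ ∑ i ∈ u, (‖s (leftPart c I i).2 - s (leftPart c I i).1‖ +
          ‖s (rightPart c I i).2 - s (rightPart c I i).1‖) :=
        Finset.sum_le_sum fun i _ => by
          rw [sub_eq_leftPart_add_rightPart s c]; exact norm_add_le _ _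
    _ ≤ ε / 2 + ε / 2 := by rw [Finset.sum_add_distrib]; exact add_le_add hu₁ hu₂
    _ = ε := add_halves ε

theorem AbsContOn.glue (hac : a ≤ c) (hcb : c ≤ b) (h₁ : AbsContOn s a c)
    (h₂ : AbsContOn s c b) : AbsContOn s a b := by
  rw [absContOn_iff_absContOnFinite] at *
  exact h₁.glue hac hcb h₂

theorem AbsContOn.congr (h : AbsContOn s a b) (hs : EqOn s' s (Icc a b)) : AbsContOn s' a b := by
  intro ε hε
  obtain ⟨δ, hδ, H⟩ := h ε hε
  refine ⟨δ, hδ, fun I hab hdisj hlen => ?_⟩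
  convert H I hab hdisj hlen using 4 with i
  have := hab i
  rw [hs ⟨by linarith, this.2.2⟩, hs ⟨this.1, by linarith⟩]

theorem AbsContOn.comp_sub (h : AbsContOn s (a - T) (b - T)) :
    AbsContOn (fun t => s (t - T)) a b := by
  intro ε hε
  obtain ⟨δ, hδ, H⟩ := h ε hε
  refine ⟨δ, hδ, fun I hab hdisj hlen => H (fun i => ((I i).1 - T, (I i).2 - T)) ?_ ?_ ?_⟩
  · exact fun i => ⟨by linarith [hab i], by linarith [hab i], by linarith [hab i]⟩
  · intro i i' hii'
    simpa only [← preimage_add_const_Ioo] using (hdisj i i' hii').preimage (· + T)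
  · simpa only [sub_sub_sub_cancel_right] using hlen

end AbsoluteContinuity

section SliceProperties

variable {k : ℕ} {s s' : ℝ → Vec k} {S A B : Set ℝ} {T c : ℝ}

theorem ae_restrict_preimage_sub {p : ℝ → Prop} (T : ℝ) (h : ∀ᵐ t ∂(volume.restrict S), p t) :
    ∀ᵐ t ∂(volume.restrict ((· - T) ⁻¹' S)), p (t - T) :=
  ((measurePreserving_sub_right volume T).restrict_preimage_emb
    (MeasurableEquiv.subRight T).measurableEmbedding S).quasiMeasurePreserving.ae h

theorem interior_preimage_sub (S : Set ℝ) (T : ℝ) :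
    interior ((· - T) ⁻¹' S) = (· - T) ⁻¹' interior S :=
  ((Homeomorph.subRight T).preimage_interior S).symm

theorem inter_Iio_subset_of_subset_Ici (hB : B ⊆ Ici T) : Iio T ∩ (A ∪ B) ⊆ A :=
  fun _ ⟨hxT, hx⟩ => hx.resolve_right fun hxB => (mem_Ici.1 (hB hxB)).not_gt hxT

theorem inter_Ioi_subset_of_subset_Iic (hA : A ⊆ Iic T) : Ioi T ∩ (A ∪ B) ⊆ B :=
  fun _ ⟨hxT, hx⟩ => hx.resolve_left fun hxA => (mem_Iic.1 (hA hxA)).not_gt hxT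

theorem ae_restrict_lt_of_subset_Iic (hA : A ⊆ Iic T) : ∀ᵐ t ∂(volume.restrict A), t < T := by
  refine (ae_restrict_iff measurableSet_Iio).2 ?_
  filter_upwards [Measure.ae_ne volume T] with t htT htA using (hA htA).lt_of_ne htT

theorem ae_restrict_gt_of_subset_Ici (hB : B ⊆ Ici T) : ∀ᵐ t ∂(volume.restrict B), T < t := by
  refine (ae_restrict_iff measurableSet_Ioi).2 ?_
  filter_upwards [Measure.ae_ne volume T] with t htT htB using (hB htB).lt_of_ne' htT

theorem notMem_interior_of_subset_Iic (hA : A ⊆ Iic T) : T ∉ interior A :=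
  fun h => by simpa using interior_mono hA h

theorem notMem_interior_of_subset_Ici (hB : B ⊆ Ici T) : T ∉ interior B :=
  fun h => by simpa using interior_mono hB h

theorem Set.OrdConnected.interior_nonempty_of_lt (hS : S.OrdConnected) {a b : ℝ} (ha : a ∈ S)
    (hb : b ∈ S) (hab : a < b) : (interior S).Nonempty :=
  (nonempty_Ioo.2 hab).mono (interior_maximal (Ioo_subset_Icc_self.trans (hS.out ha hb)) isOpen_Ioo)

theorem locAbsContOn_empty : LocAbsContOn s ∅ :=
  fun _ _ hab h => (h (left_mem_Icc.2 hab)).elim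

theorem LocAbsContOn.congr (h : LocAbsContOn s S) (hs : EqOn s' s S) : LocAbsContOn s' S :=
  fun a b hab hsub => (h a b hab hsub).congr (hs.mono hsub)

theorem LocAbsContOn.comp_sub (h : LocAbsContOn s S) (T : ℝ) :
    LocAbsContOn (fun t => s (t - T)) ((· - T) ⁻¹' S) := by
  intro a b hab hsub
  refine (h (a - T) (b - T) (by linarith) ?_).comp_sub
  rw [← image_sub_const_Icc]
  exact image_subset_iff.2 hsub

theorem LocAbsContOn.union (hA : A ⊆ Iic T) (hB : B ⊆ Ici T)
    (hAB : A.Nonempty → B.Nonempty → T ∈ A ∧ T ∈ B)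
    (h₁ : LocAbsContOn s A) (h₂ : LocAbsContOn s B) : LocAbsContOn s (A ∪ B) := by
  rcases A.eq_empty_or_nonempty with rfl | hAn
  · rwa [empty_union]
  rcases B.eq_empty_or_nonempty with rfl | hBn
  · rwa [union_empty]
  obtain ⟨hTA, hTB⟩ := hAB hAn hBn
  have hleft : ∀ x ∈ A ∪ B, x ≤ T → x ∈ A := by
    rintro x (hx | hx) hxT
    exacts [hx, le_antisymm hxT (hB hx) ▸ hTA]
  have hright : ∀ x ∈ A ∪ B, T ≤ x → x ∈ B := by
    rintro x (hx | hx) hxT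
    exacts [le_antisymm (hA hx) hxT ▸ hTB, hx]
  intro a b hab hsub
  rcases le_total b T with hbT | hTb
  · exact h₁ a b hab fun x hx => hleft x (hsub hx) (hx.2.trans hbT)
  rcases le_total T a with hTa | haT
  · exact h₂ a b hab fun x hx => hright x (hsub hx) (hTa.trans hx.1)
  refine (h₁ a T haT fun x hx => hleft x (hsub ⟨hx.1, hx.2.trans hTb⟩) hx.2).glue haT hTb
    (h₂ T b hTb fun x hx => hright x (hsub ⟨haT.trans hx.1, hx.2⟩) hx.1)

theorem lebesgueMeasurableOn_empty : LebesgueMeasurableOn s ∅ := by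
  simp [LebesgueMeasurableOn]

theorem LebesgueMeasurableOn.congr (h : LebesgueMeasurableOn s S) (hs : EqOn s' s (S \ {c})) :
    LebesgueMeasurableOn s' S := by
  refine fun U hU => (h U hU).congr (eventuallyEq_set.2 ?_)
  filter_upwards [Measure.ae_ne volume c] with t htc
  exact and_congr_right fun htS => by rw [hs ⟨htS, htc⟩]

theorem LebesgueMeasurableOn.comp_sub (h : LebesgueMeasurableOn s S) (T : ℝ) :
    LebesgueMeasurableOn (fun t => s (t - T)) ((· - T) ⁻¹' S) :=
  fun U hU => (h U hU).preimage (measurePreserving_sub_right volume T).quasiMeasurePreserving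

theorem LebesgueMeasurableOn.union (h₁ : LebesgueMeasurableOn s A) (h₂ : LebesgueMeasurableOn s B) :
    LebesgueMeasurableOn s (A ∪ B) := by
  intro U hU
  simpa only [mem_union, or_and_right, ofPred_or] using (h₁ U hU).union (h₂ U hU)

theorem locallyEssBddOn_empty : LocallyEssBddOn s ∅ :=
  fun _ hr => hr.elim

theorem LocallyEssBddOn.congr (h : LocallyEssBddOn s S) (hS : MeasurableSet S)
    (hs : EqOn s' s (S \ {c})) : LocallyEssBddOn s' S := by
  intro r hr
  obtain ⟨U, hU, hrU, M, hM, hae⟩ := h r hr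
  refine ⟨U, hU, hrU, M, hM, ?_⟩
  filter_upwards [hae, ae_restrict_mem (hU.measurableSet.inter hS),
    ae_restrict_of_ae (Measure.ae_ne volume c)] with t ht htS htc
  rwa [hs ⟨htS.2, htc⟩]

theorem LocallyEssBddOn.comp_sub (h : LocallyEssBddOn s S) (T : ℝ) :
    LocallyEssBddOn (fun t => s (t - T)) ((· - T) ⁻¹' S) := by
  intro r hr
  obtain ⟨U, hU, hrU, M, hM, hae⟩ := h (r - T) hr
  exact ⟨(· - T) ⁻¹' U, hU.preimage (continuous_sub_right T), hrU, M, hM,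
    ae_restrict_preimage_sub T hae⟩

theorem LocallyEssBddOn.union (hA : A ⊆ Iic T) (hB : B ⊆ Ici T)
    (hAB : A.Nonempty → B.Nonempty → T ∈ A ∧ T ∈ B)
    (h₁ : LocallyEssBddOn s A) (h₂ : LocallyEssBddOn s B) : LocallyEssBddOn s (A ∪ B) := by
  rcases A.eq_empty_or_nonempty with rfl | hAn
  · rwa [empty_union]
  rcases B.eq_empty_or_nonempty with rfl | hBn
  · rwa [union_empty]
  obtain ⟨hTA, hTB⟩ := hAB hAn hBn
  intro r hr
  rcases lt_trichotomy r T with hrT | rfl | hrT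
  · have hrA : r ∈ A := inter_Iio_subset_of_subset_Ici hB ⟨hrT, hr⟩
    obtain ⟨U, hU, hrU, M, hM, hae⟩ := h₁ r hrA
    refine ⟨U ∩ Iio T, hU.inter isOpen_Iio, ⟨hrU, hrT⟩, M, hM,
      ae_restrict_of_ae_restrict_of_subset ?_ hae⟩
    rintro x ⟨⟨hxU, hxT⟩, hx⟩
    exact ⟨hxU, inter_Iio_subset_of_subset_Ici hB ⟨hxT, hx⟩⟩
  · obtain ⟨U₁, hU₁, hrU₁, M₁, hM₁, hae₁⟩ := h₁ r hTA
    obtain ⟨U₂, hU₂, hrU₂, M₂, hM₂, hae₂⟩ := h₂ r hTB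
    refine ⟨U₁ ∩ U₂, hU₁.inter hU₂, ⟨hrU₁, hrU₂⟩, max M₁ M₂, le_max_of_le_left hM₁,
      ae_restrict_of_ae_restrict_of_subset (t := U₁ ∩ A ∪ U₂ ∩ B) ?_ ?_⟩
    · rintro x ⟨⟨hx₁, hx₂⟩, hxA | hxB⟩
      exacts [Or.inl ⟨hx₁, hxA⟩, Or.inr ⟨hx₂, hxB⟩]
    · rw [ae_restrict_union_iff]
      exact ⟨hae₁.mono fun _ h => le_max_of_le_left h, hae₂.mono fun _ h => le_max_of_le_right h⟩
  · have hrB : r ∈ B := inter_Ioi_subset_of_subset_Iic hA ⟨hrT, hr⟩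
    obtain ⟨U, hU, hrU, M, hM, hae⟩ := h₂ r hrB
    refine ⟨U ∩ Ioi T, hU.inter isOpen_Ioi, ⟨hrU, hrT⟩, M, hM,
      ae_restrict_of_ae_restrict_of_subset ?_ hae⟩
    rintro x ⟨⟨hxU, hxT⟩, hx⟩
    exact ⟨hxU, inter_Ioi_subset_of_subset_Iic hA ⟨hxT, hx⟩⟩

end SliceProperties

section Flows

variable {n m : ℕ} (H : HybridSystem n m) {x x' : ℝ → Vec n} {u u' : ℝ → Vec m}
  {S A B : Set ℝ} {T c : ℝ}

/-- Condition (2) of a solution pair on one time slice, without the nonempty-interior guard. -/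
def FlowsOn (x : ℝ → Vec n) (u : ℝ → Vec m) (S : Set ℝ) : Prop :=
  (∀ t ∈ interior S, (x t, u t) ∈ H.C) ∧
    ∀ᵐ t ∂(volume.restrict S), HasDerivWithinAt x (H.f (x t, u t)) S t

variable {H}

theorem flowsOn_empty : FlowsOn H x u ∅ := by
  simp [FlowsOn]

/-- An order-connected set with empty interior is a subsingleton, hence null. -/
theorem flowsOn_of_ordConnected (hS : S.OrdConnected)
    (h : (interior S).Nonempty → FlowsOn H x u S) : FlowsOn H x u S := by
  by_cases hS' : (interior S).Nonempty
  · exact h hS'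
  have hsub : S.Subsingleton := fun a ha b hb =>
    le_antisymm (not_lt.1 fun hba => hS' (hS.interior_nonempty_of_lt hb ha hba))
      (not_lt.1 fun hab => hS' (hS.interior_nonempty_of_lt ha hb hab))
  refine ⟨fun t ht => (hS' ⟨t, ht⟩).elim, ?_⟩
  rw [Measure.restrict_eq_zero.2 (hsub.measure_zero volume)]
  simp

theorem FlowsOn.congr (h : FlowsOn H x u S) (hS : MeasurableSet S) (hx : EqOn x' x S)
    (hu : EqOn u' u (S \ {c})) (hc : c ∉ interior S) : FlowsOn H x' u' S := by
  refine ⟨fun t ht => ?_, ?_⟩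
  · rw [hx (interior_subset ht), hu ⟨interior_subset ht, fun htc => hc (htc ▸ ht)⟩]
    exact h.1 t ht
  · filter_upwards [h.2, ae_restrict_mem hS, ae_restrict_of_ae (Measure.ae_ne volume c)]
      with t ht htS htc
    rw [hx htS, hu ⟨htS, htc⟩]
    exact ht.congr_of_mem (fun y hy => hx hy) htS

theorem FlowsOn.comp_sub (h : FlowsOn H x u S) (T : ℝ) :
    FlowsOn H (fun t => x (t - T)) (fun t => u (t - T)) ((· - T) ⁻¹' S) := by
  refine ⟨fun t ht => h.1 (t - T) (by rwa [interior_preimage_sub] at ht), ?_⟩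
  filter_upwards [ae_restrict_preimage_sub T h.2] with t ht
  have := ht.scomp t ((hasDerivWithinAt_id t _).sub_const T) (mapsTo_preimage _ _)
  rw [one_smul] at this
  exact this

theorem FlowsOn.union (hA : A ⊆ Iic T) (hB : B ⊆ Ici T) (h₁ : FlowsOn H x u A)
    (h₂ : FlowsOn H x u B)
    (hT : (interior A).Nonempty → (interior B).Nonempty → (x T, u T) ∈ H.C) :
    FlowsOn H x u (A ∪ B) := by
  have hleft : interior (A ∪ B) ∩ Iio T ⊆ interior A :=
    interior_maximal
      (fun t ⟨ht, htT⟩ => inter_Iio_subset_of_subset_Ici hB ⟨htT, interior_subset ht⟩)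
      (isOpen_interior.inter isOpen_Iio)
  have hright : interior (A ∪ B) ∩ Ioi T ⊆ interior B :=
    interior_maximal
      (fun t ⟨ht, htT⟩ => inter_Ioi_subset_of_subset_Iic hA ⟨htT, interior_subset ht⟩)
      (isOpen_interior.inter isOpen_Ioi)
  refine ⟨fun t ht => ?_, ?_⟩
  · rcases lt_trichotomy t T with htT | rfl | htT
    · exact h₁.1 t (hleft ⟨ht, htT⟩)
    · have hnhds : interior (A ∪ B) ∈ 𝓝 t := isOpen_interior.mem_nhds ht
      obtain ⟨a, ha, haT⟩ := Filter.nonempty_of_mem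
        (inter_mem (mem_nhdsWithin_of_mem_nhds hnhds) (self_mem_nhdsWithin (s := Iio t)))
      obtain ⟨b, hb, hbT⟩ := Filter.nonempty_of_mem
        (inter_mem (mem_nhdsWithin_of_mem_nhds hnhds) (self_mem_nhdsWithin (s := Ioi t)))
      exact hT ⟨a, hleft ⟨ha, haT⟩⟩ ⟨b, hright ⟨hb, hbT⟩⟩
    · exact h₂.1 t (hright ⟨ht, htT⟩)
  · rw [ae_restrict_union_iff]
    constructor
    · filter_upwards [h₁.2, ae_restrict_lt_of_subset_Iic hA] with t ht htT
      exact ht.mono_of_mem_nhdsWithin (mem_nhdsWithin.2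
        ⟨Iio T, isOpen_Iio, htT, inter_Iio_subset_of_subset_Ici hB⟩)
    · filter_upwards [h₂.2, ae_restrict_gt_of_subset_Ici hB] with t ht htT
      exact ht.mono_of_mem_nhdsWithin (mem_nhdsWithin.2
        ⟨Ioi T, isOpen_Ioi, htT, inter_Ioi_subset_of_subset_Iic hA⟩)

end Flows

namespace IsConcat

variable {α : Type*} {T : ℝ} {J : ℕ} {ψ₁ ψ₂ ψ : ℝ → ℕ → α} {E₁ E₂ E : Set (ℝ × ℕ)}

theorem eqOn_slice_left (h : IsConcat T J ψ₁ E₁ ψ₂ E₂ ψ E) (j : ℕ) :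
    EqOn (fun t => ψ t j) (fun t => ψ₁ t j) (Slice E₁ j \ {T}) :=
  fun t ht => h.2.1 (t, j) ht.1 fun he => ht.2 (congrArg Prod.fst he)

theorem eqOn_slice_shift (h : IsConcat T J ψ₁ E₁ ψ₂ E₂ ψ E) (j : ℕ) :
    EqOn (fun t => ψ t j) (fun t => ψ₂ (t - T) (j - J)) (Slice (Shift E₂ T J) j) :=
  fun t ht => h.2.2 (t, j) ht

theorem apply_self (h : IsConcat T J ψ₁ E₁ ψ₂ E₂ ψ E) (h₂ : IsHTD E₂) : ψ T J = ψ₂ 0 0 := by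
  simpa using h.eqOn_slice_shift J (h₂.self_mem_slice_shift T J)

theorem eqOn_slice_left_of_eq (h : IsConcat T J ψ₁ E₁ ψ₂ E₂ ψ E) (h₂ : IsHTD E₂)
    (hend : ψ₁ T J = ψ₂ 0 0) (j : ℕ) :
    EqOn (fun t => ψ t j) (fun t => ψ₁ t j) (Slice E₁ j) := by
  intro t ht
  by_cases hp : (t, j) = (T, J)
  · obtain ⟨rfl, rfl⟩ := Prod.mk.inj hp
    exact (h.apply_self h₂).trans hend.symm
  · exact h.2.1 (t, j) ht hp

end IsConcat

section Concatenation

variable {n m : ℕ} {H : HybridSystem n m} {φ₁ φ₂ φ : ℝ → ℕ → Vec n} {υ₁ υ₂ υ : ℝ → ℕ → Vec m}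
  {E₁ E₂ E : Set (ℝ × ℕ)} {T : ℝ} {J : ℕ}

theorem IsHybridArc.concat (h₁ : IsHybridArc φ₁ E₁) (h₂ : IsHybridArc φ₂ E₂)
    (hcpt : IsCompactHTD E₁) (hmax : IsMaxOf E₁ T J) (hend : φ₁ T J = φ₂ 0 0)
    (hφ : IsConcat T J φ₁ E₁ φ₂ E₂ φ E) : IsHybridArc φ E := by
  obtain rfl : E = E₁ ∪ Shift E₂ T J := hφ.1
  refine ⟨hcpt.isHTD_union_shift hmax h₂.1, fun j => ?_⟩
  have hB := forall_slice_shift (J := J) (P := LocAbsContOn) (fun _ => locAbsContOn_empty)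
    (fun _ _ h => h.comp_sub T) h₂.2 j
  exact ((h₁.2 j).congr (hφ.eqOn_slice_left_of_eq h₂.1 hend j)).union
    (hmax.slice_subset_Iic j) (h₂.1.slice_shift_subset_Ici T J j)
    (hmax.mem_slices_of_nonempty h₂.1) (hB.congr (hφ.eqOn_slice_shift j))

theorem IsHybridInput.concat (h₁ : IsHybridInput υ₁ E₁) (h₂ : IsHybridInput υ₂ E₂)
    (hcpt : IsCompactHTD E₁) (hmax : IsMaxOf E₁ T J)
    (hυ : IsConcat T J υ₁ E₁ υ₂ E₂ υ E) : IsHybridInput υ E := by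
  obtain rfl : E = E₁ ∪ Shift E₂ T J := hυ.1
  refine ⟨hcpt.isHTD_union_shift hmax h₂.1, fun j => ⟨?_, ?_⟩⟩
  · have hB := forall_slice_shift (J := J) (P := LebesgueMeasurableOn)
      (fun _ => lebesgueMeasurableOn_empty) (fun _ _ h => h.comp_sub T) (fun k => (h₂.2 k).1) j
    exact ((h₁.2 j).1.congr (hυ.eqOn_slice_left j)).union
      (hB.congr (c := T) ((hυ.eqOn_slice_shift j).mono sdiff_subset))
  · have hB := forall_slice_shift (J := J) (P := LocallyEssBddOn)
      (fun _ => locallyEssBddOn_empty) (fun _ _ h => h.comp_sub T) (fun k => (h₂.2 k).2) j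
    exact ((h₁.2 j).2.congr ((hcpt.ordConnected_slice j).measurableSet)
      (hυ.eqOn_slice_left j)).union (hmax.slice_subset_Iic j)
      (h₂.1.slice_shift_subset_Ici T J j) (hmax.mem_slices_of_nonempty h₂.1)
      (hB.congr (c := T) (h₂.1.measurableSet_slice_shift T J j)
        ((hυ.eqOn_slice_shift j).mono sdiff_subset))

namespace IsSolutionPair

theorem flowsOn (h : IsSolutionPair H φ υ E) (j : ℕ) :
    FlowsOn H (fun t => φ t j) (fun t => υ t j) (Slice E j) :=
  flowsOn_of_ordConnected (h.1.1.ordConnected_slice j) (h.2.2.2.1 j)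

theorem initial_concat (h₁ : IsSolutionPair H φ₁ υ₁ E₁) (h₂ : IsSolutionPair H φ₂ υ₂ E₂)
    (hcpt : IsCompactHTD E₁) (hφ : IsConcat T J φ₁ E₁ φ₂ E₂ φ E)
    (hυ : IsConcat T J υ₁ E₁ υ₂ E₂ υ E) : (φ 0 0, υ 0 0) ∈ closure H.C ∪ H.D := by
  by_cases h0 : ((0 : ℝ), (0 : ℕ)) = (T, J)
  · obtain ⟨rfl, rfl⟩ := Prod.mk.inj h0
    rw [hφ.apply_self h₂.1.1, hυ.apply_self h₂.1.1]
    exact h₂.2.2.1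
  · have hφ0 : φ 0 0 = φ₁ 0 0 := hφ.2.1 _ hcpt.zero_mem h0
    have hυ0 : υ 0 0 = υ₁ 0 0 := hυ.2.1 _ hcpt.zero_mem h0
    rw [hφ0, hυ0]
    exact h₁.2.2.1

theorem flowsOn_concat (h₁ : IsSolutionPair H φ₁ υ₁ E₁) (h₂ : IsSolutionPair H φ₂ υ₂ E₂)
    (hcpt : IsCompactHTD E₁) (hmax : IsMaxOf E₁ T J) (hend : φ₁ T J = φ₂ 0 0)
    (hC : (interior (Slice E₁ J)).Nonempty → (interior (Slice E₂ 0)).Nonempty →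
      (φ₂ 0 0, υ₂ 0 0) ∈ H.C)
    (hφ : IsConcat T J φ₁ E₁ φ₂ E₂ φ E) (hυ : IsConcat T J υ₁ E₁ υ₂ E₂ υ E) (j : ℕ) :
    FlowsOn H (fun t => φ t j) (fun t => υ t j) (Slice E j) := by
  obtain rfl : E = E₁ ∪ Shift E₂ T J := hφ.1
  have hA := (h₁.flowsOn j).congr (hcpt.ordConnected_slice j).measurableSet
    (hφ.eqOn_slice_left_of_eq h₂.1.1 hend j) (hυ.eqOn_slice_left j)
    (notMem_interior_of_subset_Iic (hmax.slice_subset_Iic j))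
  -- `forall_slice_shift` transports one function, so the state and the input travel as a pair.
  have hB := forall_slice_shift (T := T) (J := J)
    (P := fun p S => FlowsOn H (fun t => (p t).1) (fun t => (p t).2) S)
    (fun _ => flowsOn_empty) (fun p _ h => FlowsOn.comp_sub (x := fun t => (p t).1) h T)
    (ψ := fun t k => (φ₂ t k, υ₂ t k)) h₂.flowsOn j
  refine hA.union (hmax.slice_subset_Iic j) (h₂.1.1.slice_shift_subset_Ici T J j)
    (hB.congr (c := T) (h₂.1.1.measurableSet_slice_shift T J j) (hφ.eqOn_slice_shift j)
      ((hυ.eqOn_slice_shift j).mono sdiff_subset)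
      (notMem_interior_of_subset_Ici (h₂.1.1.slice_shift_subset_Ici T J j)))
    fun (hAi : (interior (Slice E₁ j)).Nonempty)
      (hBi : (interior (Slice (Shift E₂ T J) j)).Nonempty) => ?_
  obtain rfl := hmax.eq_of_nonempty_slices (hAi.mono interior_subset) (hBi.mono interior_subset)
  rw [hφ.apply_self h₂.1.1, hυ.apply_self h₂.1.1]
  refine hC hAi ?_
  rw [slice_shift_of_le le_rfl, interior_preimage_sub, Nat.sub_self] at hBi
  exact hBi.image (· - T) |>.mono (image_preimage_subset _ _)

theorem jump_concat (h₁ : IsSolutionPair H φ₁ υ₁ E₁) (h₂ : IsSolutionPair H φ₂ υ₂ E₂)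
    (hmax : IsMaxOf E₁ T J) (hend : φ₁ T J = φ₂ 0 0)
    (hφ : IsConcat T J φ₁ E₁ φ₂ E₂ φ E) (hυ : IsConcat T J υ₁ E₁ υ₂ E₂ υ E) :
    ∀ p ∈ E, (p.1, p.2 + 1) ∈ E →
      (φ p.1 p.2, υ p.1 p.2) ∈ H.D ∧ φ p.1 (p.2 + 1) = H.g (φ p.1 p.2, υ p.1 p.2) := by
  obtain rfl : E = E₁ ∪ Shift E₂ T J := hφ.1
  rintro ⟨x, j⟩ hp hp'
  rcases hmax.mem_succ_cases h₂.1.1 hp hp' with ⟨h1, h1', hj⟩ | ⟨h2, h2'⟩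
  · have e1 : φ x j = φ₁ x j := hφ.eqOn_slice_left_of_eq h₂.1.1 hend j h1
    have e2 : φ x (j + 1) = φ₁ x (j + 1) := hφ.eqOn_slice_left_of_eq h₂.1.1 hend (j + 1) h1'
    have e3 : υ x j = υ₁ x j := hυ.2.1 _ h1 fun he => hj.ne (congrArg Prod.snd he)
    rw [e1, e2, e3]
    exact h₁.2.2.2.2 (x, j) h1 h1'
  · have hJ : J ≤ j := (mem_shift_iff.1 h2).1
    have e1 : φ x j = φ₂ (x - T) (j - J) := hφ.eqOn_slice_shift j h2
    have e2 : φ x (j + 1) = φ₂ (x - T) (j - J + 1) := by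
      rw [← Nat.sub_add_comm hJ]; exact hφ.eqOn_slice_shift (j + 1) h2'
    have e3 : υ x j = υ₂ (x - T) (j - J) := hυ.eqOn_slice_shift j h2
    have h2'' := (mem_shift_iff.1 h2').2
    rw [Nat.sub_add_comm hJ] at h2''
    rw [e1, e2, e3]
    exact h₂.2.2.2.2 (x - T, j - J) (mem_shift_iff.1 h2).2 h2''

end IsSolutionPair

end Concatenation

/-- Proposition 1 (concatenation of solution pairs): if `ψ₁ = (φ₁, υ₁)` and
`ψ₂ = (φ₂, υ₂)` are solution pairs to `H`, `ψ₁` is compact with `(T,J) = max dom ψ₁`,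
`φ₁(T,J) = φ₂(0,0)`, and `(φ₂(0,0), υ₂(0,0)) ∈ C` whenever both `I^J_{ψ₁}` and
`I^0_{ψ₂}` have nonempty interior, then the concatenation `ψ = ψ₁|ψ₂` is a solution
pair to `H`. -/
theorem concat_is_solution_pair {n m : ℕ} (H : HybridSystem n m)
    (φ₁ : ℝ → ℕ → Vec n) (υ₁ : ℝ → ℕ → Vec m) (E₁ : Set (ℝ × ℕ))
    (φ₂ : ℝ → ℕ → Vec n) (υ₂ : ℝ → ℕ → Vec m) (E₂ : Set (ℝ × ℕ))
    (φ : ℝ → ℕ → Vec n) (υ : ℝ → ℕ → Vec m) (E : Set (ℝ × ℕ))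
    (T : ℝ) (J : ℕ)
    (h₁ : IsSolutionPair H φ₁ υ₁ E₁)
    (h₂ : IsSolutionPair H φ₂ υ₂ E₂)
    (hcpt : IsCompactHTD E₁)
    (hmax : IsMaxOf E₁ T J)
    (hend : φ₁ T J = φ₂ 0 0)
    (hC : (interior (Slice E₁ J)).Nonempty → (interior (Slice E₂ 0)).Nonempty →
      (φ₂ 0 0, υ₂ 0 0) ∈ H.C)
    (hφ : IsConcat T J φ₁ E₁ φ₂ E₂ φ E)
    (hυ : IsConcat T J υ₁ E₁ υ₂ E₂ υ E) :
    IsSolutionPair H φ υ E :=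
  ⟨h₁.1.concat h₂.1 hcpt hmax hend hφ, h₁.2.1.concat h₂.2.1 hcpt hmax hυ,
    h₁.initial_concat h₂ hcpt hφ hυ,
    fun j _ => h₁.flowsOn_concat h₂ hcpt hmax hend hC hφ hυ j,
    h₁.jump_concat h₂ hmax hend hφ hυ⟩
end
end

section
/- Let ψ₁ and ψ₂ be functions defined on hybrid time domains with dom ψ₁ a compact hybrid time domain. Then the domain of their concatenation ψ = ψ₁|ψ₂, namely dom ψ = dom ψ₁ ∪ (dom ψ₂ + {(T,J)}) where (T,J) = max dom ψ₁, is a hybrid time domain. -/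
open MeasureTheory Set

noncomputable section

lemma mem_compactHTD {E : Set (ℝ × ℕ)} {Jm : ℕ} {t : ℕ → ℝ}
    (hE : E = ⋃ j ∈ Finset.range (Jm + 1), Set.Icc (t j) (t (j + 1)) ×ˢ ({j} : Set ℕ)) :
    ∀ x j, (x, j) ∈ E ↔ j ≤ Jm ∧ t j ≤ x ∧ x ≤ t (j + 1) := by
  intro x j
  subst hE
  simp only [Set.mem_iUnion, Finset.mem_range, Set.mem_prod, Set.mem_Icc,
    Set.mem_singleton_iff]
  constructor
  · rintro ⟨i, hi, ⟨h1, h2⟩, rfl⟩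
    exact ⟨by omega, h1, h2⟩
  · rintro ⟨hj, h1, h2⟩
    exact ⟨j, by omega, ⟨h1, h2⟩, rfl⟩

lemma mem_shift {F : Set (ℝ × ℕ)} {T : ℝ} {J : ℕ} {x : ℝ} {j : ℕ} :
    (x, j) ∈ Shift F T J ↔ J ≤ j ∧ (x - T, j - J) ∈ F := by
  constructor
  · rintro ⟨⟨r, i⟩, hq, heq⟩
    rw [Prod.ext_iff] at heq
    obtain ⟨hx, hj⟩ := heq
    simp only at hx hj
    subst hx; subst hj
    refine ⟨by omega, ?_⟩
    have : r + T - T = r := by ring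
    rw [this]
    have : i + J - J = i := by omega
    rw [this]
    exact hq
  · rintro ⟨hJ, hF⟩
    refine ⟨(x - T, j - J), hF, ?_⟩
    have hx1 : x = x - T + T := by ring
    have hj1 : j = j - J + J := by omega
    rw [Prod.ext_iff]
    exact ⟨hx1, hj1⟩

lemma shift_mono {F G : Set (ℝ × ℕ)} {T : ℝ} {J : ℕ} (h : F ⊆ G) :
    Shift F T J ⊆ Shift G T J := by
  rintro p ⟨q, hq, rfl⟩
  exact ⟨q, h hq, rfl⟩

lemma shift_iUnion {F : ℕ → Set (ℝ × ℕ)} {T : ℝ} {J : ℕ} :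
    Shift (⋃ k, F k) T J = ⋃ k, Shift (F k) T J := by
  ext p
  simp only [Shift, Set.mem_iUnion, Set.mem_setOf_eq]
  constructor
  · rintro ⟨q, ⟨k, hq⟩, rfl⟩
    exact ⟨k, q, hq, rfl⟩
  · rintro ⟨k, q, hq, rfl⟩
    exact ⟨q, ⟨k, hq⟩, rfl⟩

lemma concat_compact {E₁ F : Set (ℝ × ℕ)} {T : ℝ} {J : ℕ}
    (h₁ : IsCompactHTD E₁) (hmax : IsMaxOf E₁ T J) (hF : IsCompactHTD F) :
    IsCompactHTD (E₁ ∪ Shift F T J) := by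
  obtain ⟨J₁, t, ht0, htmono, htE⟩ := h₁
  obtain ⟨J₂, s, hs0, hsmono, hsF⟩ := hF
  have hmem₁ := mem_compactHTD htE
  have hmemF := mem_compactHTD hsF
  obtain ⟨hTJ, hub⟩ := hmax
  have hJJ₁ : J = J₁ := by
    have h1 : J ≤ J₁ := ((hmem₁ T J).1 hTJ).1
    have h2 : J₁ ≤ J := by
      have : (t J₁, J₁) ∈ E₁ :=
        (hmem₁ (t J₁) J₁).2 ⟨le_refl _, le_refl _, htmono J₁ (le_refl _)⟩
      exact (hub _ this).2
    omega
  subst hJJ₁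
  have hTt : T = t (J + 1) := by
    have h1 : T ≤ t (J + 1) := ((hmem₁ T J).1 hTJ).2.2
    have h2 : t (J + 1) ≤ T := by
      have : (t (J + 1), J) ∈ E₁ :=
        (hmem₁ _ _).2 ⟨le_refl _, htmono J (le_refl _), le_refl _⟩
      exact (hub _ this).1
    linarith
  have htJT : t J ≤ T := ((hmem₁ T J).1 hTJ).2.1
  have hs01 : s 0 ≤ s 1 := hsmono 0 (Nat.zero_le _)
  refine ⟨J + J₂, fun i => if i ≤ J then t i else T + s (min (i - J) (J₂ + 1)), ?_, ?_, ?_⟩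
  · simp [ht0]
  · intro i hi
    rcases lt_trichotomy i J with h | h | h
    · simp only [if_pos (le_of_lt h), if_pos (by omega : i + 1 ≤ J)]
      exact htmono i (by omega)
    · subst h
      simp only [if_pos (le_refl i), if_neg (by omega : ¬ i + 1 ≤ i)]
      have hm : min (i + 1 - i) (J₂ + 1) = 1 := by omega
      rw [hm]
      linarith
    · simp only [if_neg (by omega : ¬ i ≤ J), if_neg (by omega : ¬ i + 1 ≤ J)]
      have h1 : min (i - J) (J₂ + 1) = i - J := by omega
      have h2 : min (i + 1 - J) (J₂ + 1) = i - J + 1 := by omega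
      rw [h1, h2]
      have := hsmono (i - J) (by omega)
      linarith
  · ext ⟨x, j⟩
    simp only [Set.mem_union, Set.mem_iUnion, Finset.mem_range, Set.mem_prod, Set.mem_Icc,
      Set.mem_singleton_iff, hmem₁ x j, mem_shift, hmemF (x - T) (j - J)]
    constructor
    · rintro (⟨hj, h1, h2⟩ | ⟨hJj, hd, h1, h2⟩)
      · refine ⟨j, by omega, ⟨?_, ?_⟩, rfl⟩
        · rw [if_pos hj]; exact h1
        · rcases lt_or_eq_of_le hj with h | h
          · rw [if_pos (by omega : j + 1 ≤ J)]; exact h2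
          · rw [if_neg (by omega : ¬ j + 1 ≤ J)]
            have hm : min (j + 1 - J) (J₂ + 1) = 1 := by omega
            rw [hm]
            have : x ≤ t (J + 1) := by rw [h] at h2; exact h2
            linarith
      · refine ⟨j, by omega, ⟨?_, ?_⟩, rfl⟩
        · rcases lt_or_eq_of_le hJj with h | h
          · rw [if_neg (by omega : ¬ j ≤ J)]
            have hm : min (j - J) (J₂ + 1) = j - J := by omega
            rw [hm]; linarith
          · rw [if_pos (by omega : j ≤ J)]
            have hz : j - J = 0 := by omega
            rw [hz, hs0] at h1
            have hjJ : t j = t J := by rw [← h]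
            linarith
        · rw [if_neg (by omega : ¬ j + 1 ≤ J)]
          have hm : min (j + 1 - J) (J₂ + 1) = j - J + 1 := by omega
          rw [hm]; linarith
    · rintro ⟨i, hi, ⟨h1, h2⟩, hji⟩
      subst hji
      rcases lt_trichotomy j J with h | h | h
      · left
        rw [if_pos (le_of_lt h)] at h1
        rw [if_pos (by omega : j + 1 ≤ J)] at h2
        exact ⟨by omega, h1, h2⟩
      · subst h
        rw [if_pos (le_refl j)] at h1
        rw [if_neg (by omega : ¬ j + 1 ≤ j)] at h2
        have hm : min (j + 1 - j) (J₂ + 1) = 1 := by omega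
        rw [hm] at h2
        rcases le_or_gt x T with hx | hx
        · left; exact ⟨le_refl _, h1, by linarith⟩
        · right
          refine ⟨le_refl _, ?_, ?_, ?_⟩
          · omega
          · have hz : j - j = 0 := by omega
            rw [hz, hs0]; linarith
          · have hz : j - j + 1 = 1 := by omega
            rw [hz]; linarith
      · right
        rw [if_neg (by omega : ¬ j ≤ J)] at h1
        rw [if_neg (by omega : ¬ j + 1 ≤ J)] at h2
        have hm1 : min (j - J) (J₂ + 1) = j - J := by omega
        have hm2 : min (j + 1 - J) (J₂ + 1) = j - J + 1 := by omega
        rw [hm1] at h1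
        rw [hm2] at h2
        exact ⟨by omega, by omega, by linarith, by linarith⟩

/-- Lemma 4: the domain of the concatenation of two functions defined on hybrid time
domains (the first compact) is a hybrid time domain. -/
theorem concat_domain_is_htd {α : Type*}
    (ψ₁ ψ₂ ψ : ℝ → ℕ → α) (E₁ E₂ E : Set (ℝ × ℕ)) (T : ℝ) (J : ℕ)
    (h₁ : IsCompactHTD E₁)
    (h₂ : IsHTD E₂)
    (hmax : IsMaxOf E₁ T J)
    (hcat : IsConcat T J ψ₁ E₁ ψ₂ E₂ ψ E) :
    IsHTD E := by
  obtain ⟨F, hFc, hFmono, hE₂⟩ := h₂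
  obtain ⟨hE, -, -⟩ := hcat
  refine ⟨fun k => E₁ ∪ Shift (F k) T J, fun k => concat_compact h₁ hmax (hFc k), ?_, ?_⟩
  · intro a b hab
    exact Set.union_subset_union_right _ (shift_mono (hFmono hab))
  · rw [hE, hE₂, shift_iUnion, Set.union_iUnion]
end
end

section
/- Let υ₁ and υ₂ be hybrid inputs with dom υ₁ a compact hybrid time domain. Then their concatenation υ = υ₁|υ₂ is a hybrid input, i.e., dom υ is a hybrid time domain and for each j ∈ ℕ, t ↦ υ(t,j) is Lebesgue measurable and locally essentially bounded on I^j_υ := {t : (t,j) ∈ dom υ}. -/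
open MeasureTheory Set

noncomputable section

lemma mem_cHTD_iff {E : Set (ℝ × ℕ)} {J : ℕ} {t : ℕ → ℝ}
    (hE : E = ⋃ j ∈ Finset.range (J + 1), Set.Icc (t j) (t (j + 1)) ×ˢ ({j} : Set ℕ))
    (x : ℝ) (j : ℕ) : (x, j) ∈ E ↔ j ≤ J ∧ x ∈ Set.Icc (t j) (t (j + 1)) := by
  subst hE
  simp only [Set.mem_iUnion, Finset.mem_range, Set.mem_prod, Set.mem_singleton_iff]
  constructor
  · rintro ⟨i, hi, hx, rfl⟩; exact ⟨by omega, hx⟩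
  · rintro ⟨hj, hx⟩; exact ⟨j, by omega, hx, rfl⟩

lemma slice_cHTD {E : Set (ℝ × ℕ)} (h : IsCompactHTD E) (j : ℕ) :
    ∃ a b : ℝ, Slice E j = Set.Icc a b ∨ Slice E j = ∅ := by
  obtain ⟨J, t, _, _, hE⟩ := h
  by_cases hj : j ≤ J
  · exact ⟨t j, t (j+1), Or.inl (by ext x; simp [Slice, mem_cHTD_iff hE, hj])⟩
  · exact ⟨0, 0, Or.inr (by ext x; simp [Slice, mem_cHTD_iff hE, hj])⟩

lemma slice_measurable {E : Set (ℝ × ℕ)} (h : IsHTD E) (j : ℕ) :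
    MeasurableSet (Slice E j) := by
  obtain ⟨F, hc, _, rfl⟩ := h
  have : Slice (⋃ k, F k) j = ⋃ k, Slice (F k) j := by ext x; simp [Slice]
  rw [this]
  refine MeasurableSet.iUnion fun k => ?_
  obtain ⟨a, b, h | h⟩ := slice_cHTD (hc k) j <;> rw [h] <;> measurability

lemma zero_mem_cHTD {E : Set (ℝ × ℕ)} (h : IsCompactHTD E) : (0, 0) ∈ E := by
  obtain ⟨J, t, h0, hm, hE⟩ := h
  rw [mem_cHTD_iff hE]
  refine ⟨Nat.zero_le _, h0.le, ?_⟩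
  have := hm 0 (Nat.zero_le _); rw [h0] at this; exact this

lemma zero_mem_HTD {E : Set (ℝ × ℕ)} (h : IsHTD E) : (0, 0) ∈ E := by
  obtain ⟨F, hc, _, rfl⟩ := h
  exact Set.mem_iUnion.2 ⟨0, zero_mem_cHTD (hc 0)⟩

lemma nonneg_of_mem_cHTD {E : Set (ℝ × ℕ)} (h : IsCompactHTD E) {p : ℝ × ℕ}
    (hp : p ∈ E) : 0 ≤ p.1 := by
  obtain ⟨J, t, h0, hm, hE⟩ := h
  obtain ⟨x, j⟩ := p
  rw [mem_cHTD_iff hE] at hp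
  have : ∀ i, i ≤ J + 1 → 0 ≤ t i := by
    intro i hi
    induction i with
    | zero => exact h0.ge
    | succ n ih => exact le_trans (ih (by omega)) (hm n (by omega))
  exact le_trans (this j (by omega)) hp.2.1

lemma nonneg_of_mem_HTD {E : Set (ℝ × ℕ)} (h : IsHTD E) {p : ℝ × ℕ}
    (hp : p ∈ E) : 0 ≤ p.1 := by
  obtain ⟨F, hc, _, rfl⟩ := h
  obtain ⟨k, hk⟩ := Set.mem_iUnion.1 hp
  exact nonneg_of_mem_cHTD (hc k) hk

lemma slice_shift {E₂ : Set (ℝ × ℕ)} {T : ℝ} {J j : ℕ} (hj : J ≤ j) :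
    Slice (Shift E₂ T J) j = (fun s => s - T) ⁻¹' Slice E₂ (j - J) := by
  ext x
  simp only [Slice, Shift, Set.mem_setOf_eq, Set.mem_preimage]
  constructor
  · rintro ⟨⟨y, i⟩, hq, heq⟩
    obtain ⟨h1, h2⟩ := Prod.mk.injEq .. ▸ heq
    simp only [Prod.mk.injEq] at heq
    obtain ⟨rfl, rfl⟩ := heq
    simpa using hq
  · intro hx
    exact ⟨(x - T, j - J), hx, by simp; omega⟩

lemma slice_shift_empty {E₂ : Set (ℝ × ℕ)} {T : ℝ} {J j : ℕ} (hj : j < J) :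
    Slice (Shift E₂ T J) j = ∅ := by
  ext x
  simp only [Slice, Shift, Set.mem_setOf_eq, Set.mem_empty_iff_false, iff_false]
  rintro ⟨q, _, heq⟩
  simp only [Prod.mk.injEq] at heq
  omega

lemma concat_cHTD {E₁ G : Set (ℝ × ℕ)} {T : ℝ} {J : ℕ}
    (h₁ : IsCompactHTD E₁) (hmax : IsMaxOf E₁ T J) (hG : IsCompactHTD G) :
    IsCompactHTD (E₁ ∪ Shift G T J) := by
  obtain ⟨J₁, t, ht0, htm, hE⟩ := h₁
  obtain ⟨J₂, s, hs0, hsm, hGE⟩ := hG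
  -- J₁ = J
  have hJJ : J₁ = J := by
    have h1 : (T, J) ∈ E₁ := hmax.1
    rw [mem_cHTD_iff hE] at h1
    have h2 : (t J₁, J₁) ∈ E₁ := by
      rw [mem_cHTD_iff hE]
      exact ⟨le_refl _, le_refl _, htm J₁ (le_refl _)⟩
    have := (hmax.2 _ h2).2
    omega
  subst hJJ
  have hT : t (J₁ + 1) = T := by
    have h1 : (T, J₁) ∈ E₁ := hmax.1
    rw [mem_cHTD_iff hE] at h1
    have h2 : (t (J₁+1), J₁) ∈ E₁ := by
      rw [mem_cHTD_iff hE]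
      exact ⟨le_refl _, htm J₁ (le_refl _), le_refl _⟩
    have := (hmax.2 _ h2).1
    exact le_antisymm this h1.2.2
  refine ⟨J₁ + J₂, fun i => if i ≤ J₁ then t i else s (i - J₁) + T, by simp [ht0], ?_, ?_⟩
  · intro i hi
    rcases lt_trichotomy i J₁ with h | h | h
    · simp only [if_pos h.le, if_pos (by omega : i + 1 ≤ J₁)]
      exact htm i (by omega)
    · subst h
      simp only [if_pos (le_refl _), if_neg (by omega : ¬ i + 1 ≤ i)]
      have : s (i + 1 - i) = s 1 := by norm_num
      rw [this]
      have h1 : t i ≤ T := hT ▸ htm i (le_refl _)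
      have h2 : (0:ℝ) ≤ s 1 := by
        have := hsm 0 (Nat.zero_le _); rw [hs0] at this; simpa using this
      linarith
    · simp only [if_neg (by omega : ¬ i ≤ J₁), if_neg (by omega : ¬ i + 1 ≤ J₁)]
      have : i + 1 - J₁ = (i - J₁) + 1 := by omega
      rw [this]
      have := hsm (i - J₁) (by omega)
      linarith
  · ext ⟨x, j⟩
    have hmem : ∀ j x, ((x, j) ∈ (⋃ i ∈ Finset.range (J₁ + J₂ + 1),
        Set.Icc ((fun i => if i ≤ J₁ then t i else s (i - J₁) + T) i)
          ((fun i => if i ≤ J₁ then t i else s (i - J₁) + T) (i+1)) ×ˢ ({i} : Set ℕ)))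
        ↔ j ≤ J₁ + J₂ ∧ x ∈ Set.Icc (if j ≤ J₁ then t j else s (j - J₁) + T)
          (if j + 1 ≤ J₁ then t (j+1) else s (j + 1 - J₁) + T) := by
      intro j x
      exact mem_cHTD_iff rfl x j
    rw [hmem]
    constructor
    · rintro (hx | hx)
      · rw [mem_cHTD_iff hE] at hx
        obtain ⟨hj, hx1, hx2⟩ := hx
        refine ⟨by omega, ?_⟩
        rcases eq_or_lt_of_le hj with h | h
        · subst h
          simp only [if_pos (le_refl _), if_neg (by omega : ¬ j + 1 ≤ j)]
          have : j + 1 - j = 1 := by omega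
          rw [this]
          have h2 : (0:ℝ) ≤ s 1 := by
            have := hsm 0 (Nat.zero_le _); rw [hs0] at this; simpa using this
          rw [hT] at hx2
          exact ⟨hx1, by linarith⟩
        · simp only [if_pos hj, if_pos (by omega : j + 1 ≤ J₁)]
          exact ⟨hx1, hx2⟩
      · obtain ⟨⟨y, i⟩, hq, heq⟩ := hx
        simp only [Prod.mk.injEq] at heq
        obtain ⟨rfl, rfl⟩ := heq
        rw [mem_cHTD_iff hGE] at hq
        obtain ⟨hi, hy1, hy2⟩ := hq
        refine ⟨by omega, ?_⟩
        rcases Nat.eq_zero_or_pos i with h | h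
        · subst h
          simp only [if_pos (by omega : 0 + J₁ ≤ J₁), if_neg (by omega : ¬ 0 + J₁ + 1 ≤ J₁)]
          have e1 : 0 + J₁ + 1 - J₁ = 1 := by omega
          rw [e1]
          rw [hs0] at hy1
          have h1 : t (0 + J₁) ≤ T := by
            have := hT ▸ htm J₁ (le_refl _); simpa using this
          constructor <;> [linarith; (simp only [Nat.zero_add] at hy2 ⊢; linarith)]
        · simp only [if_neg (by omega : ¬ i + J₁ ≤ J₁), if_neg (by omega : ¬ i + J₁ + 1 ≤ J₁)]
          have e1 : i + J₁ - J₁ = i := by omega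
          have e2 : i + J₁ + 1 - J₁ = i + 1 := by omega
          rw [e1, e2]
          exact ⟨by linarith, by linarith⟩
    · rintro ⟨hj, hx⟩
      rcases lt_trichotomy j J₁ with h | h | h
      · left
        rw [mem_cHTD_iff hE]
        simp only [if_pos h.le, if_pos (by omega : j + 1 ≤ J₁)] at hx
        exact ⟨by omega, hx⟩
      · subst h
        simp only [if_pos (le_refl _), if_neg (by omega : ¬ j + 1 ≤ j)] at hx
        have e1 : j + 1 - j = 1 := by omega
        rw [e1] at hx
        by_cases hxT : x ≤ T
        · left
          rw [mem_cHTD_iff hE]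
          exact ⟨le_refl _, hx.1, hT ▸ hxT⟩
        · right
          refine ⟨(x - T, 0), ?_, by simp⟩
          rw [mem_cHTD_iff hGE]
          refine ⟨Nat.zero_le _, ?_⟩
          rw [hs0]
          exact ⟨by simp; linarith, by simp; linarith [hx.2]⟩
      · right
        simp only [if_neg (by omega : ¬ j ≤ J₁), if_neg (by omega : ¬ j + 1 ≤ J₁)] at hx
        have e2 : j + 1 - J₁ = (j - J₁) + 1 := by omega
        rw [e2] at hx
        refine ⟨(x - T, j - J₁), ?_, by simp; omega⟩
        rw [mem_cHTD_iff hGE]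
        refine ⟨by omega, by linarith [hx.1], by linarith [hx.2]⟩

lemma concat_HTD {E₁ E₂ : Set (ℝ × ℕ)} {T : ℝ} {J : ℕ}
    (h₁ : IsCompactHTD E₁) (hmax : IsMaxOf E₁ T J) (h₂ : IsHTD E₂) :
    IsHTD (E₁ ∪ Shift E₂ T J) := by
  obtain ⟨G, hGc, hGm, rfl⟩ := h₂
  refine ⟨fun k => E₁ ∪ Shift (G k) T J, fun k => concat_cHTD h₁ hmax (hGc k), ?_, ?_⟩
  · intro a b hab
    apply Set.union_subset_union_right
    rintro p ⟨q, hq, rfl⟩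
    exact ⟨q, hGm hab hq, rfl⟩
  · ext p
    simp only [Set.mem_union, Set.mem_iUnion, Shift, Set.mem_setOf_eq]
    constructor
    · rintro (h | ⟨q, ⟨k, hk⟩, rfl⟩)
      · exact ⟨0, Or.inl h⟩
      · exact ⟨k, Or.inr ⟨q, hk, rfl⟩⟩
    · rintro ⟨k, h | ⟨q, hq, rfl⟩⟩
      · exact Or.inl h
      · exact Or.inr ⟨q, ⟨k, hq⟩, rfl⟩

lemma ae_ne_vol (T : ℝ) : ∀ᵐ t ∂(volume : Measure ℝ), t ≠ T := by
  have h : {t : ℝ | t ≠ T}ᶜ = {T} := by ext x; simp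
  rw [Filter.eventually_iff, mem_ae_iff, h]
  exact Real.volume_singleton

lemma ae_restrict_translate {P : ℝ → Prop} {s : Set ℝ} (T : ℝ) (hs : MeasurableSet s)
    (h : ∀ᵐ t ∂(volume.restrict s), P t) :
    ∀ᵐ t ∂(volume.restrict ((fun x => x - T) ⁻¹' s)), P (t - T) :=
  ((measurePreserving_sub_right volume T).restrict_preimage hs).quasiMeasurePreserving.ae h

/-- Lemma 7: the concatenation `υ = υ₁|υ₂` of two hybrid inputs is a hybrid input. -/
theorem concat_is_hybrid_input {m : ℕ}
    (υ₁ υ₂ υ : ℝ → ℕ → Vec m) (E₁ E₂ E : Set (ℝ × ℕ)) (T : ℝ) (J : ℕ)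
    (h₁ : IsHybridInput υ₁ E₁)
    (h₂ : IsHybridInput υ₂ E₂)
    (hcpt : IsCompactHTD E₁)
    (hmax : IsMaxOf E₁ T J)
    (hcat : IsConcat T J υ₁ E₁ υ₂ E₂ υ E) :
    IsHybridInput υ E := by
  obtain ⟨hE, hυ₁, hυ₂⟩ := hcat
  subst hE
  have hHTD : IsHTD (E₁ ∪ Shift E₂ T J) := concat_HTD hcpt hmax h₂.1
  refine ⟨hHTD, fun j => ?_⟩
  -- slices
  have hslice : ∀ j, Slice (E₁ ∪ Shift E₂ T J) j = Slice E₁ j ∪ Slice (Shift E₂ T J) j := by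
    intro j; ext x; simp [Slice]
  have hS₁T : ∀ x ∈ Slice E₁ j, x ≤ T := fun x hx => (hmax.2 _ hx).1
  have hS₁J : ∀ x ∈ Slice E₁ j, j ≤ J := fun x hx => (hmax.2 _ hx).2
  have hS₁meas : MeasurableSet (Slice E₁ j) := slice_measurable ⟨fun _ => E₁, fun _ => hcpt, monotone_const, (Set.iUnion_const E₁).symm⟩ j
  have hSmeas : ∀ i, MeasurableSet (Slice (E₁ ∪ Shift E₂ T J) i) := slice_measurable hHTD
  have hE₂meas : ∀ i, MeasurableSet (Slice E₂ i) := slice_measurable h₂.1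
  by_cases hj : j < J
  -- case j < J : slice is just Slice E₁ j, υ = υ₁ there
  · have hempty : Slice (Shift E₂ T J) j = ∅ := slice_shift_empty hj
    have hs : Slice (E₁ ∪ Shift E₂ T J) j = Slice E₁ j := by
      rw [hslice, hempty, Set.union_empty]
    have hval : ∀ x ∈ Slice E₁ j, υ x j = υ₁ x j := by
      intro x hx
      exact hυ₁ (x, j) hx (by simp; intro _; omega)
    constructor
    · intro U hU
      have : {t | t ∈ Slice (E₁ ∪ Shift E₂ T J) j ∧ υ t j ∈ U}
          = {t | t ∈ Slice E₁ j ∧ υ₁ t j ∈ U} := by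
        ext x
        rw [hs]
        exact and_congr_right fun hx => by rw [hval x hx]
      rw [this]
      exact (h₁.2 j).1 U hU
    · intro r hr
      rw [hs] at hr
      obtain ⟨U, hUo, hrU, c, hc, hae⟩ := (h₁.2 j).2 r hr
      refine ⟨U, hUo, hrU, c, hc, ?_⟩
      rw [hs]
      have hmem := ae_restrict_mem (hUo.measurableSet.inter hS₁meas) (μ := volume)
      filter_upwards [hae, hmem] with x h1 h2
      rw [hval x h2.2]
      exact h1
  push_neg at hj
  -- case J ≤ j
  have hshift : Slice (Shift E₂ T J) j = (fun x => x - T) ⁻¹' Slice E₂ (j - J) :=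
    slice_shift hj
  have hS₂T : ∀ x ∈ Slice (Shift E₂ T J) j, T ≤ x := by
    intro x hx
    rw [hshift] at hx
    have := nonneg_of_mem_HTD h₂.1 hx
    simp at this; linarith
  have hval₂ : ∀ x ∈ Slice (Shift E₂ T J) j, υ x j = υ₂ (x - T) (j - J) := by
    intro x hx
    exact hυ₂ (x, j) hx
  have hval₁ : ∀ x ∈ Slice E₁ j, x ≠ T ∨ j ≠ J → υ x j = υ₁ x j := by
    intro x hx h
    exact hυ₁ (x, j) hx (by simp only [ne_eq, Prod.mk.injEq, not_and]; tauto)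
  constructor
  -- measurability
  · intro U hU
    set A := {t | t ∈ Slice E₁ j ∧ υ₁ t j ∈ U} with hA
    set B := (fun x => x - T) ⁻¹' {t | t ∈ Slice E₂ (j - J) ∧ υ₂ t (j - J) ∈ U} with hB
    have hAm : NullMeasurableSet A volume := (h₁.2 j).1 U hU
    have hBm : NullMeasurableSet B volume :=
      NullMeasurableSet.preimage ((h₂.2 (j - J)).1 U hU)
        (measurePreserving_sub_right volume T).quasiMeasurePreserving
    have hsub : ∀ x, x ≠ T →
        (x ∈ {t | t ∈ Slice (E₁ ∪ Shift E₂ T J) j ∧ υ t j ∈ U} ↔ x ∈ A ∪ B) := by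
      intro x hxT
      simp only [hA, hB, Set.mem_setOf_eq, Set.mem_union, Set.mem_preimage, hslice,
        Set.mem_union]
      constructor
      · rintro ⟨h1 | h1, h2⟩
        · left
          rw [hval₁ x h1 (Or.inl hxT)] at h2
          exact ⟨h1, h2⟩
        · right
          rw [hval₂ x h1] at h2
          rw [hshift] at h1
          exact ⟨h1, h2⟩
      · rintro (⟨h1, h2⟩ | ⟨h1, h2⟩)
        · exact ⟨Or.inl h1, by rw [hval₁ x h1 (Or.inl hxT)]; exact h2⟩
        · have h1' : x ∈ Slice (Shift E₂ T J) j := by rw [hshift]; exact h1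
          exact ⟨Or.inr h1', by rw [hval₂ x h1']; exact h2⟩
    refine NullMeasurableSet.congr (hAm.union hBm) ?_
    rw [Filter.eventuallyEq_set]
    filter_upwards [ae_ne_vol T] with x hx
    exact (hsub x hx).symm
  -- local essential boundedness
  · intro r hr
    rw [hslice] at hr
    have key : ∀ (V : Set ℝ), IsOpen V → r ∈ V → (∃ c : ℝ, 0 ≤ c ∧
        ∀ᵐ t ∂(volume.restrict (V ∩ Slice (E₁ ∪ Shift E₂ T J) j)), ‖υ t j‖ ≤ c) →
        ∃ U : Set ℝ, IsOpen U ∧ r ∈ U ∧ ∃ c : ℝ, 0 ≤ c ∧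
        ∀ᵐ t ∂(volume.restrict (U ∩ Slice (E₁ ∪ Shift E₂ T J) j)), ‖υ t j‖ ≤ c :=
      fun V h1 h2 h3 => ⟨V, h1, h2, h3⟩
    -- bound on the E₁ part near a point of Slice E₁ j
    have bdd₁ : ∀ r' ∈ Slice E₁ j, ∃ U : Set ℝ, IsOpen U ∧ r' ∈ U ∧ ∃ c : ℝ, 0 ≤ c ∧
        ∀ᵐ t ∂(volume.restrict (U ∩ Slice E₁ j)), ‖υ t j‖ ≤ c := by
      intro r' hr'
      obtain ⟨U, hUo, hrU, c, hc, hae⟩ := (h₁.2 j).2 r' hr'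
      refine ⟨U, hUo, hrU, c, hc, ?_⟩
      have hmem := ae_restrict_mem (hUo.measurableSet.inter hS₁meas) (μ := volume)
      have hne : ∀ᵐ t ∂(volume.restrict (U ∩ Slice E₁ j)), t ≠ T :=
        (ae_ne_vol T).filter_mono (ae_mono Measure.restrict_le_self)
      filter_upwards [hae, hmem, hne] with x h1 h2 h3
      rw [hval₁ x h2.2 (Or.inl h3)]
      exact h1
    -- bound on the shifted part near a point of Slice (Shift E₂ T J) j
    have bdd₂ : ∀ r' ∈ Slice (Shift E₂ T J) j, ∃ U : Set ℝ, IsOpen U ∧ r' ∈ U ∧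
        ∃ c : ℝ, 0 ≤ c ∧
        ∀ᵐ t ∂(volume.restrict (U ∩ Slice (Shift E₂ T J) j)), ‖υ t j‖ ≤ c := by
      intro r' hr'
      have hr'' : r' - T ∈ Slice E₂ (j - J) := by rw [hshift] at hr'; exact hr'
      obtain ⟨U, hUo, hrU, c, hc, hae⟩ := (h₂.2 (j - J)).2 (r' - T) hr''
      refine ⟨(fun x => x - T) ⁻¹' U, hUo.preimage (continuous_sub_right T), hrU, c, hc, ?_⟩
      have heq : (fun x => x - T) ⁻¹' U ∩ Slice (Shift E₂ T J) j
          = (fun x => x - T) ⁻¹' (U ∩ Slice E₂ (j - J)) := by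
        rw [hshift]; rfl
      rw [heq]
      have := ae_restrict_translate T (hUo.measurableSet.inter (hE₂meas (j - J))) hae
      have hmem : ∀ᵐ t ∂(volume.restrict ((fun x => x - T) ⁻¹' (U ∩ Slice E₂ (j - J)))),
          t ∈ (fun x => x - T) ⁻¹' (U ∩ Slice E₂ (j - J)) :=
        ae_restrict_mem (((hUo.measurableSet.inter (hE₂meas (j - J)))).preimage
          (measurable_sub_const T))
      filter_upwards [this, hmem] with x h1 h2
      have hx : x ∈ Slice (Shift E₂ T J) j := by rw [hshift]; exact h2.2
      rw [hval₂ x hx]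
      exact h1
    have combine : ∀ (A B : Set ℝ) (c₁ c₂ : ℝ),
        (∀ᵐ t ∂(volume.restrict A), ‖υ t j‖ ≤ c₁) →
        (∀ᵐ t ∂(volume.restrict B), ‖υ t j‖ ≤ c₂) →
        ∀ᵐ t ∂(volume.restrict (A ∪ B)), ‖υ t j‖ ≤ max c₁ c₂ := by
      intro A B c₁ c₂ hA hB
      have h12 : ∀ᵐ t ∂(volume.restrict A + volume.restrict B), ‖υ t j‖ ≤ max c₁ c₂ :=
        ae_add_measure_iff.2 ⟨hA.mono fun x hx => hx.trans (le_max_left _ _),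
          hB.mono fun x hx => hx.trans (le_max_right _ _)⟩
      exact h12.filter_mono (ae_mono (Measure.restrict_union_le _ _))
    by_cases hrT : r = T
    · subst hrT
      rcases Nat.eq_or_lt_of_le hj with hjJ | hjJ
      -- j = J : r = T is in both parts; combine the two bounds
      · have hrS₁ : r ∈ Slice E₁ j := by
          have := hmax.1; rw [hjJ] at this; exact this
        have hrS₂ : r ∈ Slice (Shift E₂ r J) j := by
          rw [hshift]
          have h00 : ((0 : ℝ), 0) ∈ E₂ := zero_mem_HTD h₂.1
          have : j - J = 0 := by omega
          rw [this]
          simpa [Slice] using h00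
        obtain ⟨U₁, hU₁o, hrU₁, c₁, hc₁, hae₁⟩ := bdd₁ r hrS₁
        obtain ⟨U₂, hU₂o, hrU₂, c₂, hc₂, hae₂⟩ := bdd₂ r hrS₂
        refine key (U₁ ∩ U₂) (hU₁o.inter hU₂o) ⟨hrU₁, hrU₂⟩
          ⟨max c₁ c₂, le_trans hc₁ (le_max_left _ _), ?_⟩
        have hsub : (U₁ ∩ U₂) ∩ Slice (E₁ ∪ Shift E₂ r J) j
            ⊆ (U₁ ∩ Slice E₁ j) ∪ (U₂ ∩ Slice (Shift E₂ r J) j) := by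
          rintro x ⟨⟨h1, h2⟩, hx⟩
          rw [hslice] at hx
          rcases hx with hx | hx
          · exact Or.inl ⟨h1, hx⟩
          · exact Or.inr ⟨h2, hx⟩
        exact ae_restrict_of_ae_restrict_of_subset hsub (combine _ _ _ _ hae₁ hae₂)
      -- j > J : the E₁ part of the slice is empty
      · have hS₁empty : Slice E₁ j = ∅ := by
          ext x
          simp only [Set.mem_empty_iff_false, iff_false]
          intro hx
          exact absurd (hS₁J x hx) (by omega)
        have hrS₂ : r ∈ Slice (Shift E₂ r J) j := by
          rw [hS₁empty] at hr
          simpa using hr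
        obtain ⟨U, hUo, hrU, c, hc, hae⟩ := bdd₂ r hrS₂
        refine key U hUo hrU ⟨c, hc, ?_⟩
        apply ae_restrict_of_ae_restrict_of_subset (t := U ∩ Slice (Shift E₂ r J) j) _ hae
        rintro x ⟨hxU, hx⟩
        rw [hslice, hS₁empty] at hx
        simp only [Set.empty_union] at hx
        exact ⟨hxU, hx⟩
    -- r ≠ T : r is strictly on one side of T
    · rcases hr with hr | hr
      · have hlt : r < T := lt_of_le_of_ne (hS₁T r hr) hrT
        obtain ⟨U, hUo, hrU, c, hc, hae⟩ := bdd₁ r hr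
        refine key (U ∩ Set.Iio T) (hUo.inter isOpen_Iio) ⟨hrU, hlt⟩ ⟨c, hc, ?_⟩
        apply ae_restrict_of_ae_restrict_of_subset (t := U ∩ Slice E₁ j) _ hae
        rintro x ⟨⟨hxU, hxT⟩, hx⟩
        rw [hslice] at hx
        rcases hx with hx | hx
        · exact ⟨hxU, hx⟩
        · exact absurd (hS₂T x hx) (not_le.2 hxT)
      · have hlt : T < r := lt_of_le_of_ne (hS₂T r hr) (Ne.symm hrT)
        obtain ⟨U, hUo, hrU, c, hc, hae⟩ := bdd₂ r hr
        refine key (U ∩ Set.Ioi T) (hUo.inter isOpen_Ioi) ⟨hrU, hlt⟩ ⟨c, hc, ?_⟩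
        apply ae_restrict_of_ae_restrict_of_subset (t := U ∩ Slice (Shift E₂ T J) j) _ hae
        rintro x ⟨⟨hxU, hxT⟩, hx⟩
        rw [hslice] at hx
        rcases hx with hx | hx
        · exact absurd (hS₁T x hx) (not_le.2 hxT)
        · exact ⟨hxU, hx⟩
end
end
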